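/- arXiv:1708.06559 — 9 statements merged into one kernel-verified Lean document; each statement's English description precedes it below -/
import Mathlib

section
/- For every natural number n, the (n+1)×(n+1) matrix A with A(0,0) = 1092+77n, A(0,j) = 84+10n for j ≥ 1, A(i,0) = 77 for i ≥ 1, A(i,i) = -14 and A(i,j) = 10 for 1 ≤ i ≠ j ≤ n, is invertible over ℚ. -/
/-- For every natural number n, the (n+1)×(n+1) rational matrix A with
A(0,0) = 1092+77n, A(0,j) = 84+10n for j ≥ 1, A(i,0) = 77 for i ≥ 1,
A(i,i) = -14 and A(i,j) = 10 for 1 ≤ i ≠ j ≤ n, is invertible over ℚ. -/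
theorem stmt1 (n : ℕ)
    (A : Matrix (Fin (n + 1)) (Fin (n + 1)) ℚ)
    (hA : A = Matrix.of fun i j =>
      if i = 0 ∧ j = 0 then 1092 + 77 * (n : ℚ)
      else if i = 0 then 84 + 10 * (n : ℚ)
      else if j = 0 then 77
      else if i = j then -14 else 10) :
    IsUnit A := by
  rw [Matrix.isUnit_iff_isUnit_det, isUnit_iff_ne_zero]
  intro hdet
  obtain ⟨v, hv, hAv⟩ := Matrix.exists_mulVec_eq_zero_iff.mpr hdet
  set S : ℚ := ∑ j, v j with hS
  have hrow : ∀ i, ∑ j, A i j * v j = 0 := by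
    intro i
    have := congrFun hAv i
    simpa [Matrix.mulVec, dotProduct] using this
  -- row 0 equation
  have h0 : (84 + 10 * (n : ℚ)) * S + (1008 + 67 * (n : ℚ)) * v 0 = 0 := by
    have h := hrow 0
    have key : ∀ j : Fin (n + 1), A 0 j * v j =
        (84 + 10 * (n : ℚ)) * v j + (1008 + 67 * (n : ℚ)) * (if j = 0 then v 0 else 0) := by
      intro j
      subst hA
      simp only [Matrix.of_apply]
      by_cases hj : j = 0
      · subst hj; simp; ring
      · simp [hj]
    rw [Finset.sum_congr rfl (fun j _ => key j)] at h
    rw [Finset.sum_add_distrib, ← Finset.mul_sum, ← Finset.mul_sum] at h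
    simpa [Finset.sum_ite_eq'] using h
  -- rows i ≠ 0
  have hi : ∀ i : Fin (n + 1), i ≠ 0 → 24 * v i = 10 * S + 67 * v 0 := by
    intro i hi0
    have h := hrow i
    have key : ∀ j : Fin (n + 1), A i j * v j =
        10 * v j + 67 * (if j = 0 then v 0 else 0) - 24 * (if j = i then v i else 0) := by
      intro j
      subst hA
      simp only [Matrix.of_apply]
      by_cases hj0 : j = 0
      · subst hj0
        simp [hi0, Ne.symm hi0]
        ring
      · by_cases hji : j = i
        · subst hji
          simp [hi0, hj0]
          ring
        · simp [hi0, hj0, Ne.symm hji, hji]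
    rw [Finset.sum_congr rfl (fun j _ => key j)] at h
    rw [Finset.sum_sub_distrib, Finset.sum_add_distrib, ← Finset.mul_sum,
      ← Finset.mul_sum, ← Finset.mul_sum] at h
    simp only [Finset.sum_ite_eq', Finset.mem_univ, if_true] at h
    linarith [h]
  -- the sum equation
  have hsum : 24 * S = 24 * v 0 + (n : ℚ) * (10 * S + 67 * v 0) := by
    have h2 : ∑ j ∈ Finset.univ.erase (0 : Fin (n + 1)), (24 : ℚ) * v j
        = (n : ℚ) * (10 * S + 67 * v 0) := by
      rw [Finset.sum_congr rfl (fun j hj => hi j (Finset.mem_erase.mp hj).1)]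
      rw [Finset.sum_const, Finset.card_erase_of_mem (Finset.mem_univ _)]
      simp [nsmul_eq_mul]
      ring
    calc 24 * S = ∑ j : Fin (n + 1), (24 : ℚ) * v j := by rw [hS, Finset.mul_sum]
      _ = 24 * v 0 + ∑ j ∈ Finset.univ.erase (0 : Fin (n + 1)), (24 : ℚ) * v j :=
          (Finset.add_sum_erase _ _ (Finset.mem_univ 0)).symm
      _ = 24 * v 0 + (n : ℚ) * (10 * S + 67 * v 0) := by rw [h2]
  -- eliminate S
  have hkey : ((26208 : ℚ) - 2604 * n) * v 0 = 0 := by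
    linear_combination (24 - 10 * (n : ℚ)) * h0 - (84 + 10 * (n : ℚ)) * hsum
  have hne : ((26208 : ℚ) - 2604 * n) ≠ 0 := by
    intro h
    have : (2604 * n : ℕ) = 26208 := by
      have : (2604 : ℚ) * n = 26208 := by linarith
      exact_mod_cast this
    omega
  have hv0 : v 0 = 0 := by
    rcases mul_eq_zero.mp hkey with h | h
    · exact absurd h hne
    · exact h
  have hpos : (0 : ℚ) < 84 + 10 * n := by positivity
  have hSz : S = 0 := by
    rw [hv0] at h0
    have : (84 + 10 * (n : ℚ)) * S = 0 := by linarith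
    rcases mul_eq_zero.mp this with h | h
    · linarith
    · exact h
  apply hv
  funext i
  by_cases hi0 : i = 0
  · simpa [hi0] using hv0
  · have := hi i hi0
    rw [hv0, hSz] at this
    have : (24 : ℚ) * v i = 0 := by linarith
    simpa using this
end

section
/- Let M̂ be the linear endomorphism of E = ℚ^{𝓔} defined by the explicit coefficients M̂_{α,β} (listed in the context). For each 1 ≤ i ≤ n-1, define u_i ∈ E by (u_i)_i = 1, (u_i)_{i+1} = -1, all other coordinates 0, and v_i ∈ E by (v_i)_{{i,k}} = 1 and (v_i)_{{i+1,k}} = -1 for all k ≠ i, i+1, all other coordinates 0. Then M̂·u_i = 28 u_i + 10 v_i and M̂·v_i = (32i - 24 - 4n) u_i + (12i - 12 - 2n) v_i; in particular the plane spanned by u_i and v_i is invariant under M̂. -/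
open Matrix

/-- Index set 𝓔 = {∅} ∪ {1,…,n} ∪ {{i,j} : i < j}, with points and pairs 0-indexed
(`Fin n` value `i` represents the paper's marked point `i+1`). -/
abbrev PairIdx (n : ℕ) := {p : Fin n × Fin n // p.1 < p.2}
abbrev TautIdx (n : ℕ) := Unit ⊕ Fin n ⊕ PairIdx n
abbrev EVec (n : ℕ) := TautIdx n → ℚ

/-- The matrix M̂ with the explicit coefficients from the paper. -/
def Mhat (n : ℕ) : Matrix (TautIdx n) (TautIdx n) ℚ :=
  Matrix.of fun α β =>
    match α, β with
    | Sum.inl _, Sum.inl _ => 5 * ((n : ℚ) + 6)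
    | Sum.inl _, Sum.inr (Sum.inl _) => 5 * (n : ℚ) + 34
    | Sum.inl _, Sum.inr (Sum.inr _) => 5 * ((n : ℚ) + 6)
    | Sum.inr (Sum.inl _), Sum.inl _ => 7
    | Sum.inr (Sum.inl k), Sum.inr (Sum.inl p) => if k = p then 35 else 7
    | Sum.inr (Sum.inl k), Sum.inr (Sum.inr P) =>
        if k = P.1.1 then 3 else if k = P.1.2 then 35 else 7
    | Sum.inr (Sum.inr _), Sum.inl _ => 5
    | Sum.inr (Sum.inr P), Sum.inr (Sum.inl p) =>
        if p = P.1.1 ∨ p = P.1.2 then 15 else 5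
    | Sum.inr (Sum.inr P), Sum.inr (Sum.inr Q) =>
        if P.1 = Q.1 then 9
        else if Q.1.1 = P.1.1 ∨ Q.1.1 = P.1.2 then 3
        else if Q.1.2 = P.1.1 ∨ Q.1.2 = P.1.2 then 15 else 5

/-- `uvec n i j` is the vector u_i of the paper, where `j` encodes the point i+1:
β_i = 1, β_{i+1} = -1, all other coordinates 0. -/
def uvec (n : ℕ) (i j : Fin n) : EVec n
  | Sum.inr (Sum.inl k) => if k = i then 1 else if k = j then -1 else 0
  | _ => 0

/-- `vvec n i j` is the vector v_i: γ_{ik} = 1 and γ_{i+1,k} = -1 for k ≠ i, i+1. -/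
def vvec (n : ℕ) (i j : Fin n) : EVec n
  | Sum.inr (Sum.inr P) =>
      if (P.1.1 = i ∨ P.1.2 = i) ∧ P.1.1 ≠ j ∧ P.1.2 ≠ j then 1
      else if (P.1.1 = j ∨ P.1.2 = j) ∧ P.1.1 ≠ i ∧ P.1.2 ≠ i then -1 else 0
  | _ => 0

/-- w_{ijkl}: γ_{ik} = 1, γ_{jl} = 1, γ_{il} = -1, γ_{jk} = -1 (for i < j < k < l). -/
def wvec (n : ℕ) (i j k l : Fin n) : EVec n
  | Sum.inr (Sum.inr P) =>
      if P.1 = (i, k) then 1 else if P.1 = (j, l) then 1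
      else if P.1 = (i, l) then -1 else if P.1 = (j, k) then -1 else 0
  | _ => 0

/-- t_{ijkl}: β_j = 2, β_k = -2, γ_{ij} = -3, γ_{ik} = 3, γ_{jl} = -5, γ_{kl} = 5. -/
def tvec (n : ℕ) (i j k l : Fin n) : EVec n
  | Sum.inr (Sum.inl p) => if p = j then 2 else if p = k then -2 else 0
  | Sum.inr (Sum.inr P) =>
      if P.1 = (i, j) then -3 else if P.1 = (i, k) then 3
      else if P.1 = (j, l) then -5 else if P.1 = (k, l) then 5 else 0
  | _ => 0

/-- z: γ_{a,c} = 1, γ_{b,c} = -1 (for the exceptional case a = 3m+1, b = 3m+2, c = n). -/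
def zvec (n : ℕ) (a b c : Fin n) : EVec n
  | Sum.inr (Sum.inr P) => if P.1 = (a, c) then 1 else if P.1 = (b, c) then -1 else 0
  | _ => 0

namespace Stmt3Aux

lemma sum_lt (n : ℕ) (a : Fin n) (x y : ℚ) :
    ∑ q : Fin n, (if q < a then x else y) = (a : ℚ) * x + ((n : ℚ) - (a : ℚ)) * y := by
  rw [Finset.sum_ite]
  have h1 : Finset.filter (fun q => q < a) Finset.univ = Finset.Iio a := by ext q; simp
  have h2 : Finset.filter (fun q => ¬ q < a) Finset.univ = Finset.Ici a := by
    ext q; simp [not_lt]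
  rw [h1, h2, Finset.sum_const, Finset.sum_const, Fin.card_Iio, Fin.card_Ici]
  simp only [nsmul_eq_mul, Nat.cast_sub a.isLt.le]

lemma sum_pairF (n : ℕ) (F : Fin n × Fin n → ℚ) :
    ∑ P : PairIdx n, F P.1 = ∑ x : Fin n × Fin n, if x.1 < x.2 then F x else 0 := by
  rw [← Finset.sum_filter]
  exact (Finset.sum_subtype _ (by simp) _).symm

lemma key (n : ℕ) (i j : Fin n) (hne : i ≠ j) (F : Fin n × Fin n → ℚ) :
    ∑ P : PairIdx n, F P.1 * vvec n i j (Sum.inr (Sum.inr P))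
      = ∑ q : Fin n, (if q = i ∨ q = j then 0 else
          (if i < q then F (i, q) else F (q, i)) - (if j < q then F (j, q) else F (q, j))) := by
  classical
  have hv : ∀ P : PairIdx n, F P.1 * vvec n i j (Sum.inr (Sum.inr P))
      = (fun x : Fin n × Fin n => F x *
          (if (x.1 = i ∨ x.2 = i) ∧ x.1 ≠ j ∧ x.2 ≠ j then 1
           else if (x.1 = j ∨ x.2 = j) ∧ x.1 ≠ i ∧ x.2 ≠ i then -1 else 0)) P.1 := by
    intro P; simp [vvec]
  rw [Finset.sum_congr rfl (fun P _ => hv P),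
    sum_pairF n (fun x : Fin n × Fin n => F x *
          (if (x.1 = i ∨ x.2 = i) ∧ x.1 ≠ j ∧ x.2 ≠ j then 1
           else if (x.1 = j ∨ x.2 = j) ∧ x.1 ≠ i ∧ x.2 ≠ i then -1 else 0)),
    Fintype.sum_prod_type]
  have hT : ∀ p q : Fin n,
      (if p < q then F (p, q) *
          (if (p = i ∨ q = i) ∧ p ≠ j ∧ q ≠ j then 1
           else if (p = j ∨ q = j) ∧ p ≠ i ∧ q ≠ i then -1 else 0) else 0)
      = (if p = i ∧ q ≠ j ∧ i < q then F (i, q) else 0)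
        + (if p = j ∧ q ≠ i ∧ j < q then -F (j, q) else 0)
        + (if q = i ∧ p ≠ j ∧ p < i then F (p, i) else 0)
        + (if q = j ∧ p ≠ i ∧ p < j then -F (p, j) else 0) := by
    intro p q
    by_cases hpi : p = i <;> by_cases hpj : p = j <;> by_cases hqi : q = i <;>
      by_cases hqj : q = j <;> simp_all
  simp only [hT, Finset.sum_add_distrib]
  have e1 : ∑ p : Fin n, ∑ q : Fin n, (if p = i ∧ q ≠ j ∧ i < q then F (i, q) else 0)
      = ∑ q : Fin n, (if q ≠ j ∧ i < q then F (i, q) else 0) := by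
    rw [Finset.sum_comm]
    refine Finset.sum_congr rfl fun q _ => ?_
    simp [ite_and]
  have e2 : ∑ p : Fin n, ∑ q : Fin n, (if p = j ∧ q ≠ i ∧ j < q then -F (j, q) else 0)
      = ∑ q : Fin n, (if q ≠ i ∧ j < q then -F (j, q) else 0) := by
    rw [Finset.sum_comm]
    refine Finset.sum_congr rfl fun q _ => ?_
    simp [ite_and]
  have e3 : ∑ p : Fin n, ∑ q : Fin n, (if q = i ∧ p ≠ j ∧ p < i then F (p, i) else 0)
      = ∑ p : Fin n, (if p ≠ j ∧ p < i then F (p, i) else 0) := by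
    refine Finset.sum_congr rfl fun p _ => ?_
    simp [ite_and]
  have e4 : ∑ p : Fin n, ∑ q : Fin n, (if q = j ∧ p ≠ i ∧ p < j then -F (p, j) else 0)
      = ∑ p : Fin n, (if p ≠ i ∧ p < j then -F (p, j) else 0) := by
    refine Finset.sum_congr rfl fun p _ => ?_
    simp [ite_and]
  rw [e1, e2, e3, e4, ← Finset.sum_add_distrib, ← Finset.sum_add_distrib,
    ← Finset.sum_add_distrib]
  refine Finset.sum_congr rfl fun q _ => ?_
  by_cases h1 : q = i
  · subst h1; simp [lt_irrefl, hne]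
  by_cases h2 : q = j
  · subst h2; simp [lt_irrefl, hne]
  rcases Ne.lt_or_gt (h1 : q ≠ i) with h3 | h3 <;>
    rcases Ne.lt_or_gt (h2 : q ≠ j) with h4 | h4 <;>
    simp [h1, h2, h3, h4, h3.not_gt, h4.not_gt] <;> ring

lemma sum_u (n : ℕ) (i j : Fin n) (hne : i ≠ j) (f : Fin n → ℚ) :
    ∑ k : Fin n, f k * (if k = i then 1 else if k = j then -1 else 0) = f i - f j := by
  have h : ∀ k, f k * (if k = i then 1 else if k = j then -1 else 0)
      = (if k = i then f k else 0) + (if k = j then -f k else 0) := by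
    intro k
    by_cases h1 : k = i <;> by_cases h2 : k = j <;> simp_all
  rw [Finset.sum_congr rfl fun k _ => h k, Finset.sum_add_distrib,
    Finset.sum_ite_eq', Finset.sum_ite_eq']
  simp [sub_eq_add_neg]

lemma Mu (n : ℕ) (i j : Fin n) (hij : (j : ℕ) = (i : ℕ) + 1) :
    Mhat n *ᵥ uvec n i j = (28 : ℚ) • uvec n i j + (10 : ℚ) • vvec n i j := by
  have hne : i ≠ j := by intro h; rw [h] at hij; omega
  funext α
  have expand : (Mhat n *ᵥ uvec n i j) α
      = ∑ k : Fin n, Mhat n α (Sum.inr (Sum.inl k)) *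
          (if k = i then 1 else if k = j then -1 else 0) := by
    rw [Matrix.mulVec, dotProduct, Fintype.sum_sum_type, Fintype.sum_sum_type]
    simp [uvec]
  rw [expand, sum_u n i j hne]
  rcases α with _ | k | P
  · simp [Mhat, uvec, vvec]
  · simp only [Mhat, Matrix.of_apply, Pi.add_apply, Pi.smul_apply, smul_eq_mul,
      uvec, vvec]
    by_cases h1 : k = i <;> by_cases h2 : k = j <;> simp_all <;> ring
  · simp only [Mhat, Matrix.of_apply, Pi.add_apply, Pi.smul_apply, smul_eq_mul,
      uvec, vvec]
    have hP : P.1.1 < P.1.2 := P.2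
    by_cases h1 : i = P.1.1 <;> by_cases h2 : i = P.1.2 <;>
      by_cases h3 : j = P.1.1 <;> by_cases h4 : j = P.1.2 <;>
      simp_all [eq_comm] <;> ring_nf <;> omega

lemma Mv (n : ℕ) (i j : Fin n) (hij : (j : ℕ) = (i : ℕ) + 1) :
    Mhat n *ᵥ vvec n i j
      = (32 * ((i : ℚ) + 1) - 24 - 4 * (n : ℚ)) • uvec n i j
        + (12 * ((i : ℚ) + 1) - 12 - 2 * (n : ℚ)) • vvec n i j := by
  have hne : i ≠ j := by intro h; rw [h] at hij; omega
  have hQ : (j : ℚ) = (i : ℚ) + 1 := by exact_mod_cast hij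
  have hx : ∀ q : Fin n, q ≠ i → q ≠ j → (i < q ↔ j < q) := by
    intro q h1 h2
    have e1 : (q : ℕ) ≠ (i : ℕ) := fun h => h1 (Fin.ext h)
    have e2 : (q : ℕ) ≠ (j : ℕ) := fun h => h2 (Fin.ext h)
    rw [Fin.lt_def, Fin.lt_def]; omega
  have hji : ¬ j < i := by rw [Fin.lt_def]; omega
  have hilt : i < j := by rw [Fin.lt_def]; omega
  funext α
  have expand : (Mhat n *ᵥ vvec n i j) α
      = ∑ P : PairIdx n, Mhat n α (Sum.inr (Sum.inr P)) * vvec n i j (Sum.inr (Sum.inr P)) := by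
    rw [Matrix.mulVec, dotProduct, Fintype.sum_sum_type, Fintype.sum_sum_type]
    simp [vvec]
  rw [expand]
  rcases α with _ | k | P
  · -- α = ∅
    refine Eq.trans (key n i j hne (fun _ => 5 * ((n : ℚ) + 6))) ?_
    rw [Finset.sum_eq_zero (fun q _ => by split_ifs <;> ring)]
    simp [uvec, vvec]
  · -- α = point k
    refine Eq.trans (key n i j hne
      (fun x => if k = x.1 then 3 else if k = x.2 then 35 else 7)) ?_
    by_cases hk1 : k = i
    · subst hk1
      refine Eq.trans (Finset.sum_congr rfl (fun q _ => ?_) :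
          _ = ∑ q : Fin n, ((if q < k then (28:ℚ) else -4)
            + ((if q = k then (4:ℚ) else 0) + (if q = j then (4:ℚ) else 0)))) ?_
      · simp only []
        by_cases h1 : q = k
        · subst h1; simp [lt_irrefl, hne]
        by_cases h2 : q = j
        · subst h2; simp [lt_irrefl, hji, hne.symm]
        · have hiff := hx q h1 h2
          rcases Ne.lt_or_gt (h1 : q ≠ k) with h3 | h3
          · have h4 : ¬ j < q := fun h => (h3.not_gt) (hiff.mpr h)
            simp [h1, h2, h3, h3.not_gt, h4, hne, Ne.symm h1]
            norm_num
          · have h4 : j < q := hiff.mp h3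
            simp [h1, h2, h3, h3.not_gt, h4, hne, Ne.symm h1]
            norm_num
      · rw [Finset.sum_add_distrib, Finset.sum_add_distrib, sum_lt,
          Finset.sum_ite_eq', Finset.sum_ite_eq']
        simp [uvec, vvec, hne]
        ring
    by_cases hk2 : k = j
    · subst hk2
      refine Eq.trans (Finset.sum_congr rfl (fun q _ => ?_) :
          _ = ∑ q : Fin n, ((if q < k then (-28:ℚ) else 4)
            + ((if q = i then (28:ℚ) else 0) + (if q = k then (-4:ℚ) else 0)))) ?_
      · simp only []
        by_cases h1 : q = i
        · subst h1; simp [lt_irrefl, hne, hilt, Ne.symm hne]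
        by_cases h2 : q = k
        · subst h2; simp [lt_irrefl, hne, Ne.symm hne, h1]
        · have hiff := hx q h1 h2
          rcases Ne.lt_or_gt (h2 : q ≠ k) with h3 | h3
          · have h4 : ¬ i < q := fun h => (h3.not_gt) (hiff.mp h)
            simp [h1, h2, h3, h3.not_gt, h4, hne, Ne.symm hne, Ne.symm h1, Ne.symm h2]
            norm_num
          · have h4 : i < q := hiff.mpr h3
            simp [h1, h2, h3, h3.not_gt, h4, hne, Ne.symm hne, Ne.symm h1, Ne.symm h2]
            norm_num
      · rw [Finset.sum_add_distrib, Finset.sum_add_distrib, sum_lt,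
          Finset.sum_ite_eq', Finset.sum_ite_eq']
        simp [uvec, vvec, hne, Ne.symm hne]
        rw [hQ]; ring
    · -- k ∉ {i, j}
      rw [Finset.sum_eq_zero]
      · simp [uvec, vvec, hk1, hk2]
      · intro q _
        by_cases h1 : q = i
        · simp [h1]
        by_cases h2 : q = j
        · simp [h2]
        simp only [h1, h2, or_self, if_false]
        by_cases h3 : q = k
        · subst h3
          have hiff := hx q h1 h2
          by_cases h5 : i < q
          · simp [h1, h2, h5, hiff.mp h5]
          · have h6 : ¬ j < q := fun h => h5 (hiff.mpr h)
            simp [h1, h2, h5, h6]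
        · have h4 : ¬ (k = q) := Ne.symm h3
          simp [hk1, hk2, h3, h4, Ne.symm hk1, Ne.symm hk2]
  · -- α = pair
    obtain ⟨⟨k, l⟩, hkl⟩ := P
    have hklN : (k : ℕ) < (l : ℕ) := hkl
    refine Eq.trans (key n i j hne
      (fun x => if (k, l) = x then 9 else if x.1 = k ∨ x.1 = l then 3
        else if x.2 = k ∨ x.2 = l then 15 else 5)) ?_
    by_cases hA : k = i ∨ l = i <;> by_cases hB : k = j ∨ l = j
    · -- case (d) : {k,l} = {i,j}
      have hkij : k = i ∧ l = j := by
        rcases hA with h1 | h1 <;> rcases hB with h2 | h2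
        · exact absurd (h1.symm.trans h2) hne
        · exact ⟨h1, h2⟩
        · exfalso
          have e1 := congrArg Fin.val h1
          have e2 := congrArg Fin.val h2
          omega
        · exact absurd (h1.symm.trans h2) hne
      obtain ⟨rfl, rfl⟩ := hkij
      rw [Finset.sum_eq_zero]
      · simp [uvec, vvec, hne]
      · intro q _
        by_cases h1 : q = k
        · simp [h1]
        by_cases h2 : q = l
        · simp [h2]
        simp only [h1, h2, or_self, if_false]
        have hiff := hx q h1 h2
        by_cases h5 : k < q
        · simp [h1, h2, h5, hiff.mp h5, hne, Ne.symm hne, Ne.symm h1, Ne.symm h2, Prod.ext_iff]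
        · have h6 : ¬ l < q := fun h => h5 (hiff.mpr h)
          simp [h1, h2, h5, h6, hne, Ne.symm hne, Ne.symm h1, Ne.symm h2, Prod.ext_iff]
    · -- case (b) : i ∈ {k,l}, j ∉
      push_neg at hB
      obtain ⟨hB1, hB2⟩ := hB
      rcases hA with rfl | rfl
      · -- b1 : k = i, m = l
        have hil : k < l := hkl
        have hjl : j < l := by
          rw [Fin.lt_def]
          have e2 : (l : ℕ) ≠ (j : ℕ) := fun h => hB2 (Fin.ext h)
          omega
        refine Eq.trans (Finset.sum_congr rfl (fun q _ => ?_) :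
            _ = ∑ q : Fin n, ((if q < k then (10:ℚ) else -2)
              + ((if q = k then (2:ℚ) else 0) + ((if q = j then (2:ℚ) else 0)
                + (if q = l then (-4:ℚ) else 0))))) ?_
        · by_cases h1 : q = k
          · subst h1; simp [lt_irrefl, hne, hil.ne]; try norm_num
          by_cases h2 : q = j
          · subst h2; simp [hji, Ne.symm hne, hjl.ne]; try norm_num
          by_cases h3 : q = l
          · subst h3
            simp [h1, h2, hil, hjl, hil.asymm, Prod.ext_iff, hne, Ne.symm hne, hB2,
              Ne.symm hB2, hjl.ne', hil.ne']
            try norm_num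
          · have hiff := hx q h1 h2
            rcases Ne.lt_or_gt (h1 : q ≠ k) with h5 | h5
            · have h6 : ¬ j < q := fun h => h5.not_gt (hiff.mpr h)
              simp [h1, h2, h3, h5, h5.not_gt, h6, Prod.ext_iff, Ne.symm h1, Ne.symm h2,
                Ne.symm h3, hne, Ne.symm hne, hB2, Ne.symm hB2]
              try norm_num
            · have h6 : j < q := hiff.mp h5
              simp [h1, h2, h3, h5, h5.not_gt, h6, Prod.ext_iff, Ne.symm h1, Ne.symm h2,
                Ne.symm h3, hne, Ne.symm hne, hB2, Ne.symm hB2]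
              try norm_num
        · rw [Finset.sum_add_distrib, Finset.sum_add_distrib, Finset.sum_add_distrib,
            sum_lt, Finset.sum_ite_eq', Finset.sum_ite_eq', Finset.sum_ite_eq']
          simp [uvec, vvec, hne, hB2, hil.ne']
          ring
      · -- b2 : l = i, m = k
        have hki : k < l := hkl
        have hkj : k < j := hki.trans hilt
        refine Eq.trans (Finset.sum_congr rfl (fun q _ => ?_) :
            _ = ∑ q : Fin n, ((if q < l then (10:ℚ) else -2)
              + ((if q = l then (2:ℚ) else 0) + ((if q = j then (2:ℚ) else 0)
                + (if q = k then (-4:ℚ) else 0))))) ?_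
        · by_cases h1 : q = l
          · subst h1; simp [lt_irrefl, hne, hki.ne']; try norm_num
          by_cases h2 : q = j
          · subst h2; simp [hji, Ne.symm hne, Ne.symm hB1]; try norm_num
          by_cases h3 : q = k
          · subst h3
            simp [h1, h2, hki, hki.asymm, hkj.asymm, Prod.ext_iff, hne, Ne.symm hne,
              hB1, Ne.symm hB1, hki.ne]
            try norm_num
          · have hiff := hx q h1 h2
            rcases Ne.lt_or_gt (h1 : q ≠ l) with h5 | h5
            · have h6 : ¬ j < q := fun h => h5.not_gt (hiff.mpr h)
              simp [h1, h2, h3, h5, h5.not_gt, h6, Prod.ext_iff, Ne.symm h1, Ne.symm h2,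
                Ne.symm h3, hne, hB1, hB2, Ne.symm hB1, Ne.symm hB2]
              try norm_num
            · have h6 : j < q := hiff.mp h5
              simp [h1, h2, h3, h5, h5.not_gt, h6, Prod.ext_iff, Ne.symm h1, Ne.symm h2,
                Ne.symm h3, hne, hB1, hB2, Ne.symm hB1, Ne.symm hB2]
              try norm_num
        · rw [Finset.sum_add_distrib, Finset.sum_add_distrib, Finset.sum_add_distrib,
            sum_lt, Finset.sum_ite_eq', Finset.sum_ite_eq', Finset.sum_ite_eq']
          simp [uvec, vvec, hne, hB1, hB2]
          ring
    · -- case (c) : j ∈ {k,l}, i ∉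
      push_neg at hA
      obtain ⟨hA1, hA2⟩ := hA
      rcases hB with rfl | rfl
      · -- c1 : k = j, m = l
        have hjl : k < l := hkl
        have hihk : i < k := hilt
        have hil2 : i < l := hihk.trans hjl
        refine Eq.trans (Finset.sum_congr rfl (fun q _ => ?_) :
            _ = ∑ q : Fin n, ((if q < k then (-10:ℚ) else 2)
              + ((if q = i then (10:ℚ) else 0) + ((if q = k then (-2:ℚ) else 0)
                + (if q = l then (4:ℚ) else 0))))) ?_
        · by_cases h1 : q = i
          · subst h1; simp [lt_irrefl, hne, hilt, Ne.symm hA2]; try norm_num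
          by_cases h2 : q = k
          · subst h2; simp [lt_irrefl, Ne.symm hne, hjl.ne]; try norm_num
          by_cases h3 : q = l
          · subst h3
            simp [h1, h2, hjl, hil2, hjl.asymm, hil2.asymm, Prod.ext_iff, hne,
              Ne.symm hne, hA2, Ne.symm hA2, hjl.ne']
            try norm_num
          · have hiff := hx q h1 h2
            rcases Ne.lt_or_gt (h2 : q ≠ k) with h5 | h5
            · have h6 : ¬ i < q := fun h => h5.not_gt (hiff.mp h)
              simp [h1, h2, h3, h5, h5.not_gt, h6, Prod.ext_iff, Ne.symm h1, Ne.symm h2,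
                Ne.symm h3, hne, Ne.symm hne, hA1, hA2, Ne.symm hA2, hjl.ne']
              try norm_num
            · have h6 : i < q := hiff.mpr h5
              simp [h1, h2, h3, h5, h5.not_gt, h6, Prod.ext_iff, Ne.symm h1, Ne.symm h2,
                Ne.symm h3, hne, Ne.symm hne, hA1, hA2, Ne.symm hA2, hjl.ne']
              try norm_num
        · rw [Finset.sum_add_distrib, Finset.sum_add_distrib, Finset.sum_add_distrib,
            sum_lt, Finset.sum_ite_eq', Finset.sum_ite_eq', Finset.sum_ite_eq']
          simp [uvec, vvec, hne, Ne.symm hne, hA1, hA2]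
          rw [hQ]; ring
      · -- c2 : l = j, m = k
        have hkj : k < l := hkl
        have hki : k < i := by
          rw [Fin.lt_def]
          have e1 : (k : ℕ) ≠ (i : ℕ) := fun h => hA1 (Fin.ext h)
          have e2 : (k : ℕ) < (l : ℕ) := hklN
          omega
        refine Eq.trans (Finset.sum_congr rfl (fun q _ => ?_) :
            _ = ∑ q : Fin n, ((if q < l then (-10:ℚ) else 2)
              + ((if q = i then (10:ℚ) else 0) + ((if q = l then (-2:ℚ) else 0)
                + (if q = k then (4:ℚ) else 0))))) ?_
        · by_cases h1 : q = i
          · subst h1; simp [lt_irrefl, hne, hilt, hki.ne']; try norm_num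
          by_cases h2 : q = l
          · subst h2; simp [lt_irrefl, Ne.symm hne, hkj.ne']; try norm_num
          by_cases h3 : q = k
          · subst h3
            simp [h1, h2, hkj, hki, hkj.asymm, hki.asymm, Prod.ext_iff, hne,
              Ne.symm hne, hA1, hkj.ne]
            try norm_num
          · have hiff := hx q h1 h2
            rcases Ne.lt_or_gt (h2 : q ≠ l) with h5 | h5
            · have h6 : ¬ i < q := fun h => h5.not_gt (hiff.mp h)
              simp [h1, h2, h3, h5, h5.not_gt, h6, Prod.ext_iff, Ne.symm h1, Ne.symm h2,
                Ne.symm h3, hne, Ne.symm hne, hA1, Ne.symm hA1, hA2, hkj.ne]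
              try norm_num
            · have h6 : i < q := hiff.mpr h5
              simp [h1, h2, h3, h5, h5.not_gt, h6, Prod.ext_iff, Ne.symm h1, Ne.symm h2,
                Ne.symm h3, hne, Ne.symm hne, hA1, Ne.symm hA1, hA2, hkj.ne]
              try norm_num
        · rw [Finset.sum_add_distrib, Finset.sum_add_distrib, Finset.sum_add_distrib,
            sum_lt, Finset.sum_ite_eq', Finset.sum_ite_eq', Finset.sum_ite_eq']
          simp [uvec, vvec, hne, Ne.symm hne, hA1, hA2]
          rw [hQ]; ring
    · -- case (a) : disjoint
      push_neg at hA; push_neg at hB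
      obtain ⟨hA1, hA2⟩ := hA
      obtain ⟨hB1, hB2⟩ := hB
      rw [Finset.sum_eq_zero]
      · simp [uvec, vvec, hA1, hA2, hB1, hB2]
      · intro q _
        by_cases h1 : q = i
        · simp [h1]
        by_cases h2 : q = j
        · simp [h2]
        simp only [h1, h2, or_self, if_false]
        have hiff := hx q h1 h2
        by_cases h3 : q = k
        · subst h3
          by_cases h5 : i < q
          · simp [h1, h2, h5, hiff.mp h5, hA1, hA2, hB1, hB2, hkl.ne, Prod.ext_iff,
              Ne.symm hA1, Ne.symm hB1, Ne.symm hA2, Ne.symm hB2]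
          · have h6 : ¬ j < q := fun h => h5 (hiff.mpr h)
            simp [h1, h2, h5, h6, hA1, hA2, hB1, hB2, hkl.ne, Prod.ext_iff,
              Ne.symm hA1, Ne.symm hB1, Ne.symm hA2, Ne.symm hB2]
        by_cases h4 : q = l
        · subst h4
          by_cases h5 : i < q
          · simp [h1, h2, h5, hiff.mp h5, hA1, hA2, hB1, hB2, hkl.ne', Prod.ext_iff,
              Ne.symm hA2, Ne.symm hB2, Ne.symm h3, Ne.symm hA1, Ne.symm hB1]
          · have h6 : ¬ j < q := fun h => h5 (hiff.mpr h)
            simp [h1, h2, h5, h6, hA1, hA2, hB1, hB2, hkl.ne', Prod.ext_iff,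
              Ne.symm hA2, Ne.symm hB2, Ne.symm h3, Ne.symm hA1, Ne.symm hB1]
        · simp [h1, h2, h3, h4, hA1, hA2, hB1, hB2, Prod.ext_iff,
            Ne.symm hA1, Ne.symm hA2, Ne.symm hB1, Ne.symm hB2, Ne.symm h3, Ne.symm h4]

end Stmt3Aux

/-- For 1 ≤ i ≤ n-1 (here `i j : Fin n` with j = i+1, 0-indexed so the paper's
index i is `(i : ℕ) + 1`): M̂·u_i = 28 u_i + 10 v_i and
M̂·v_i = (32i - 24 - 4n) u_i + (12i - 12 - 2n) v_i; in particular the plane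
spanned by u_i and v_i is invariant under M̂. -/
theorem stmt3 (n : ℕ) (hn : 2 ≤ n) (i j : Fin n) (hij : (j : ℕ) = (i : ℕ) + 1) :
    (Mhat n *ᵥ uvec n i j = (28 : ℚ) • uvec n i j + (10 : ℚ) • vvec n i j ∧
     Mhat n *ᵥ vvec n i j
        = (32 * ((i : ℚ) + 1) - 24 - 4 * (n : ℚ)) • uvec n i j
          + (12 * ((i : ℚ) + 1) - 12 - 2 * (n : ℚ)) • vvec n i j) ∧
    ∀ x ∈ Submodule.span ℚ ({uvec n i j, vvec n i j} : Set (EVec n)),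
      Mhat n *ᵥ x ∈ Submodule.span ℚ ({uvec n i j, vvec n i j} : Set (EVec n)) := by
  have h1 := Stmt3Aux.Mu n i j hij
  have h2 := Stmt3Aux.Mv n i j hij
  refine ⟨⟨h1, h2⟩, ?_⟩
  intro x hx
  rw [Submodule.mem_span_pair] at hx
  obtain ⟨a, b, rfl⟩ := hx
  rw [Matrix.mulVec_add, Matrix.mulVec_smul, Matrix.mulVec_smul, h1, h2]
  have hu : uvec n i j ∈ Submodule.span ℚ ({uvec n i j, vvec n i j} : Set (EVec n)) :=
    Submodule.subset_span (Set.mem_insert _ _)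
  have hv : vvec n i j ∈ Submodule.span ℚ ({uvec n i j, vvec n i j} : Set (EVec n)) :=
    Submodule.subset_span (Set.mem_insert_of_mem _ rfl)
  exact Submodule.add_mem _
    (Submodule.smul_mem _ _ (Submodule.add_mem _ (Submodule.smul_mem _ _ hu)
      (Submodule.smul_mem _ _ hv)))
    (Submodule.smul_mem _ _ (Submodule.add_mem _ (Submodule.smul_mem _ _ hu)
      (Submodule.smul_mem _ _ hv)))
end

section
/- Let M̂ be the endomorphism of E defined in the context. For 1 ≤ i < j < k < l ≤ n, define w_{ijkl} ∈ E by γ_{ik} = 1, γ_{jl} = 1, γ_{il} = -1, γ_{jk} = -1 and all other coordinates zero. Then M̂·w_{ijkl} = -4·w_{ijkl}, i.e., w_{ijkl} is an eigenvector of M̂ with eigenvalue -4. -/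
open Matrix

/-!
Write `w_{ijkl}` as the pair vector `{a, b} ↦ f a * g b` with `f = δ_i - δ_j` and `g = δ_k - δ_l`:
both have sum zero, and the support of `f` lies strictly before that of `g`, so every
ordered pair `(a, b)` with `f a * g b ≠ 0` already has `a < b`. Restricted to pair columns, the
matrix `M̂ + 4` has entries of the separable form `α + φ a + ψ b` in every row; in the pair row
`{c, d}`, for instance, the entry is `5 - 2 [a ∈ {c, d}] + 10 [b ∈ {c, d}]`, and the diagonal
entry `9 = 13 - 4` is exactly what the shift by `4` repairs. Summing a separable function
against `f ⊗ g` gives zero, hence `(M̂ + 4) w = 0`.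
-/

def pairTensor {n : ℕ} (f g : Fin n → ℚ) : EVec n
  | Sum.inr (Sum.inr Q) => f Q.1.1 * g Q.1.2
  | _ => 0

theorem sum_pairIdx_eq_sum_sum {n : ℕ} {M : Type*} [AddCommMonoid M] (F : Fin n → Fin n → M)
    (hF : ∀ a b, F a b ≠ 0 → a < b) :
    ∑ Q : PairIdx n, F Q.1.1 Q.1.2 = ∑ a, ∑ b, F a b := by
  rw [← Finset.sum_subtype (Finset.univ.filter fun p : Fin n × Fin n => p.1 < p.2)
      (by simp) (fun p => F p.1 p.2),
    Finset.sum_filter_of_ne (fun p _ => hF p.1 p.2), Fintype.sum_prod_type]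

theorem sum_sum_mul_add_eq_zero {ι R : Type*} [Fintype ι] [CommSemiring R] {f g : ι → R}
    (hf : ∑ a, f a = 0) (hg : ∑ b, g b = 0) (α : R) (φ ψ : ι → R) :
    ∑ a, ∑ b, f a * g b * (α + φ a + ψ b) = 0 := by
  simp only [mul_add, Finset.sum_add_distrib]
  simp [← Finset.mul_sum, ← Finset.sum_mul, mul_comm, mul_left_comm, hf, hg]

theorem exists_Mhat_add_four_smul_one_apply_pair {n : ℕ} (x : TautIdx n) :
    ∃ (α : ℚ) (φ ψ : Fin n → ℚ), ∀ Q : PairIdx n,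
      (Mhat n + (4 : ℚ) • 1 : Matrix (TautIdx n) (TautIdx n) ℚ) x (Sum.inr (Sum.inr Q)) =
        α + φ Q.1.1 + ψ Q.1.2 := by
  rcases x with _ | p | ⟨⟨c, d⟩, hcd : c < d⟩
  · exact ⟨5 * ((n : ℚ) + 6), 0, 0, fun Q => by simp [Mhat]⟩
  · refine ⟨7, fun a => if p = a then -4 else 0, fun b => if p = b then 28 else 0, ?_⟩
    rintro ⟨⟨a, b⟩, hab : a < b⟩
    simp only [Matrix.add_apply, Matrix.smul_apply, Mhat, of_apply, one_apply, Sum.inr.injEq,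
      reduceCtorEq, if_false, smul_zero, add_zero, Fin.ext_iff]
    rw [Fin.lt_def] at hab
    split_ifs <;> first | omega | norm_num
  · refine ⟨5, fun a => (if a = c then -2 else 0) + (if a = d then -2 else 0),
      fun b => (if b = c then 10 else 0) + (if b = d then 10 else 0), ?_⟩
    rintro ⟨⟨a, b⟩, hab : a < b⟩
    simp only [Matrix.add_apply, Matrix.smul_apply, Mhat, of_apply, one_apply, Sum.inr.injEq,
      Subtype.mk.injEq, Prod.mk.injEq, Fin.ext_iff]
    rw [Fin.lt_def] at hab hcd
    split_ifs <;> first | omega | norm_num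

theorem Mhat_mulVec_pairTensor {n : ℕ} {f g : Fin n → ℚ} (hf : ∑ a, f a = 0)
    (hg : ∑ b, g b = 0) (hfg : ∀ a b, f a ≠ 0 → g b ≠ 0 → a < b) :
    Mhat n *ᵥ pairTensor f g = (-4 : ℚ) • pairTensor f g := by
  have hker : (Mhat n + (4 : ℚ) • 1) *ᵥ pairTensor f g = 0 := by
    funext x
    obtain ⟨α, φ, ψ, hcol⟩ := exists_Mhat_add_four_smul_one_apply_pair x
    calc ((Mhat n + (4 : ℚ) • 1) *ᵥ pairTensor f g) x
        = ∑ Q : PairIdx n, f Q.1.1 * g Q.1.2 * (α + φ Q.1.1 + ψ Q.1.2) := by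
          rw [mulVec, dotProduct, Fintype.sum_sum_type, Fintype.sum_sum_type]
          simp [pairTensor, hcol, mul_comm]
      _ = ∑ a, ∑ b, f a * g b * (α + φ a + ψ b) :=
          sum_pairIdx_eq_sum_sum (fun a b => f a * g b * (α + φ a + ψ b)) fun a b h =>
            hfg a b (left_ne_zero_of_mul (left_ne_zero_of_mul h))
              (right_ne_zero_of_mul (left_ne_zero_of_mul h))
      _ = 0 := sum_sum_mul_add_eq_zero hf hg α φ ψ
  rw [add_mulVec, smul_mulVec, one_mulVec] at hker
  rw [eq_neg_of_add_eq_zero_left hker, neg_smul]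

theorem eq_or_eq_of_single_sub_single_ne_zero {ι R : Type*} [DecidableEq ι] [AddGroup R]
    {i j a : ι} {x y : R} (h : (Pi.single i x - Pi.single j y : ι → R) a ≠ 0) :
    a = i ∨ a = j := by
  by_contra! hne
  simp [hne.1, hne.2] at h

theorem wvec_eq_pairTensor {n : ℕ} {i j k l : Fin n} (hij : i ≠ j) (hkl : k ≠ l) :
    wvec n i j k l =
      pairTensor (Pi.single i 1 - Pi.single j 1) (Pi.single k 1 - Pi.single l 1) := by
  funext x
  rcases x with _ | p | ⟨⟨a, b⟩, hab⟩
  · rfl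
  · rfl
  · simp only [wvec, pairTensor, Prod.mk.injEq, Pi.sub_apply, Pi.single_apply]
    split_ifs <;> simp_all

theorem stmt5_general (n : ℕ) (i j k l : Fin n)
    (hij : i < j) (hjk : j < k) (hkl : k < l) :
    Mhat n *ᵥ wvec n i j k l = (-4 : ℚ) • wvec n i j k l := by
  rw [wvec_eq_pairTensor hij.ne hkl.ne]
  refine Mhat_mulVec_pairTensor (by simp) (by simp) fun a b ha hb => ?_
  rcases eq_or_eq_of_single_sub_single_ne_zero ha with rfl | rfl <;>
    rcases eq_or_eq_of_single_sub_single_ne_zero hb with rfl | rfl <;> order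

/-- For 1 ≤ i < j < k < l ≤ n, the vector w_{ijkl} is an eigenvector of M̂
with eigenvalue -4. -/
theorem stmt5 (n : ℕ) (hn : 4 ≤ n) (i j k l : Fin n)
    (hij : i < j) (hjk : j < k) (hkl : k < l) :
    Mhat n *ᵥ wvec n i j k l = (-4 : ℚ) • wvec n i j k l :=
  stmt5_general n i j k l hij hjk hkl
end

section
/- Let M̂ be the endomorphism of E defined in the context. For 1 ≤ i < j < k < l ≤ n, define t_{ijkl} ∈ E by β_j = 2, β_k = -2, γ_{ij} = -3, γ_{ik} = 3, γ_{jl} = -5, γ_{kl} = 5, all other coordinates zero. Then M̂·t_{ijkl} = -4·t_{ijkl}. -/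
open Matrix

/-!
`t_{ijkl}` is a combination of six basis vectors, so `M̂ t_{ijkl}` is the same combination of six
columns of `M̂`, and the claim is checked row by row. The coordinates of `t_{ijkl}` sum to zero both
on the points and on the pairs, so the constant part of every row of `M̂` cancels; in particular
the `∅` row gives `0`, and the remaining rows reduce to a case analysis on how the row index meets
`{i, j, k, l}`.
-/

section
variable {n : ℕ} {i j k l : Fin n}

theorem tvec_eq_sum_single (hij : i < j) (hjk : j < k) (hkl : k < l) :
    tvec n i j k l =
      Pi.single (Sum.inr (Sum.inl j)) 2 + Pi.single (Sum.inr (Sum.inl k)) (-2)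
      + Pi.single (Sum.inr (Sum.inr ⟨(i, j), hij⟩)) (-3)
      + Pi.single (Sum.inr (Sum.inr ⟨(i, k), hij.trans hjk⟩)) 3
      + Pi.single (Sum.inr (Sum.inr ⟨(j, l), hjk.trans hkl⟩)) (-5)
      + Pi.single (Sum.inr (Sum.inr ⟨(k, l), hkl⟩)) 5 := by
  funext α
  rcases α with _ | p | ⟨⟨a, b⟩, hab⟩ <;>
    simp only [tvec, Pi.add_apply, Pi.single_apply, Sum.inr.injEq, Subtype.mk.injEq,
      reduceCtorEq] <;>
    grind

theorem Mhat_mulVec_tvec_apply (hij : i < j) (hjk : j < k) (hkl : k < l) (α : TautIdx n) :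
    (Mhat n *ᵥ tvec n i j k l) α =
      2 * Mhat n α (Sum.inr (Sum.inl j)) - 2 * Mhat n α (Sum.inr (Sum.inl k))
      - 3 * Mhat n α (Sum.inr (Sum.inr ⟨(i, j), hij⟩))
      + 3 * Mhat n α (Sum.inr (Sum.inr ⟨(i, k), hij.trans hjk⟩))
      - 5 * Mhat n α (Sum.inr (Sum.inr ⟨(j, l), hjk.trans hkl⟩))
      + 5 * Mhat n α (Sum.inr (Sum.inr ⟨(k, l), hkl⟩)) := by
  simp only [tvec_eq_sum_single hij hjk hkl, mulVec_add, mulVec_single, Pi.add_apply,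
    Pi.smul_apply, op_smul_eq_mul, col_apply]
  ring

end

theorem stmt6_general (n : ℕ) (i j k l : Fin n)
    (hij : i < j) (hjk : j < k) (hkl : k < l) :
    Mhat n *ᵥ tvec n i j k l = (-4 : ℚ) • tvec n i j k l := by
  funext α
  rw [Mhat_mulVec_tvec_apply hij hjk hkl, Pi.smul_apply, smul_eq_mul]
  rcases α with _ | m | ⟨⟨a, b⟩, hab⟩ <;> simp only [Mhat, tvec, of_apply]
  · ring
  · grind
  · grind

/-- For 1 ≤ i < j < k < l ≤ n, the vector t_{ijkl} satisfies
M̂·t_{ijkl} = -4·t_{ijkl}. -/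
theorem stmt6 (n : ℕ) (hn : 4 ≤ n) (i j k l : Fin n)
    (hij : i < j) (hjk : j < k) (hkl : k < l) :
    Mhat n *ᵥ tvec n i j k l = (-4 : ℚ) • tvec n i j k l :=
  stmt6_general n i j k l hij hjk hkl
end

section
/- For every natural number n, the determinant of the 3×3 matrix with rows (5(n+6), 5n+34, 5(n+6)), (7n, 7n+28, 7n+24), and (5n(n-1)/2, 5(n-1)(n+4)/2, 5n²/2 + 11n/2 - 12) equals -32(n+6)(2n+15); in particular it never vanishes for n ∈ ℕ. -/
/-- For every natural number n, the determinant of the 3×3 matrix with rows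
(5(n+6), 5n+34, 5(n+6)), (7n, 7n+28, 7n+24),
(5n(n-1)/2, 5(n-1)(n+4)/2, 5n²/2 + 11n/2 - 12) equals -32(n+6)(2n+15);
in particular it never vanishes for n ∈ ℕ. -/
theorem stmt11 (n : ℕ) :
    (!![5 * ((n : ℚ) + 6), 5 * (n : ℚ) + 34, 5 * ((n : ℚ) + 6);
        7 * (n : ℚ), 7 * (n : ℚ) + 28, 7 * (n : ℚ) + 24;
        5 * (n : ℚ) * ((n : ℚ) - 1) / 2, 5 * ((n : ℚ) - 1) * ((n : ℚ) + 4) / 2,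
          5 * (n : ℚ) ^ 2 / 2 + 11 * (n : ℚ) / 2 - 12]).det
      = -32 * ((n : ℚ) + 6) * (2 * (n : ℚ) + 15) ∧
    -32 * ((n : ℚ) + 6) * (2 * (n : ℚ) + 15) ≠ 0 := by
  constructor
  · rw [Matrix.det_fin_three]
    simp [Matrix.cons_val_zero, Matrix.cons_val_one]
    ring
  · have h1 : (0:ℚ) < (n : ℚ) + 6 := by positivity
    have h2 : (0:ℚ) < 2 * (n : ℚ) + 15 := by positivity
    nlinarith
end

section
/- For every n ≥ 1, the determinant of the matrix M̂ equals (-1)^{n(n-1)/2} · 2^{n²+n+1} · (2n+15) · (n+6)!/6!, and in particular M̂ is invertible, so its rank equals n(n+1)/2 + 1. -/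
open Matrix

namespace Stmt12Aux

def Ecol (n : ℕ) : Matrix (TautIdx n) (TautIdx n) ℚ :=
  Matrix.of fun γ β =>
    (if γ = β then 1 else 0) +
    match γ, β with
    | Sum.inl _, Sum.inr (Sum.inl _) => -1
    | Sum.inr (Sum.inl k), Sum.inr (Sum.inr P) => if k = P.1.2 then -1 else 0
    | _, _ => 0

def Frow (n : ℕ) : Matrix (TautIdx n) (TautIdx n) ℚ :=
  Matrix.of fun α γ =>
    (if α = γ then 1 else 0) +
    match α, γ with
    | Sum.inr (Sum.inr K), Sum.inr (Sum.inl k) =>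
        if k = K.1.1 ∨ k = K.1.2 then -(5/14) else 0
    | _, _ => 0

def Tmat (n : ℕ) : Matrix (TautIdx n) (TautIdx n) ℚ :=
  Matrix.of fun α β =>
    match α, β with
    | Sum.inl _, Sum.inl _ => 5*((n:ℚ)+6)
    | Sum.inl _, Sum.inr (Sum.inl _) => 4
    | Sum.inl _, Sum.inr (Sum.inr _) => -4
    | Sum.inr (Sum.inl _), Sum.inl _ => 7
    | Sum.inr (Sum.inl k), Sum.inr (Sum.inl q) => if k = q then 28 else 0
    | Sum.inr (Sum.inl k), Sum.inr (Sum.inr P) => if k = P.1.1 then -4 else 0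
    | Sum.inr (Sum.inr _), Sum.inl _ => 0
    | Sum.inr (Sum.inr _), Sum.inr (Sum.inl _) => 0
    | Sum.inr (Sum.inr K), Sum.inr (Sum.inr P) =>
        (if P.1.1 = K.1.1 ∨ P.1.1 = K.1.2 then -(4/7) else 0) +
        (if K.1 = P.1 then -4 else 0)

lemma mulE (n : ℕ) (X : Matrix (TautIdx n) (TautIdx n) ℚ) :
    X * Ecol n = Matrix.of fun α β =>
      X α β - (match β with
        | Sum.inl _ => 0
        | Sum.inr (Sum.inl _) => X α (Sum.inl ())
        | Sum.inr (Sum.inr P) => X α (Sum.inr (Sum.inl P.1.2))) := by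
  ext α β
  rw [Matrix.mul_apply, Fintype.sum_sum_type, Fintype.sum_sum_type]
  rcases β with u | k | P <;>
    simp [Ecol, mul_ite, mul_one, mul_zero, mul_neg, Finset.sum_add_distrib, sub_eq_add_neg] <;> ring

lemma sum_ite_or {n : ℕ} {a b : Fin n} (hab : a ≠ b) (c : ℚ) (f : Fin n → ℚ) :
    ∑ k : Fin n, (if k = a ∨ k = b then c * f k else 0) = c * f a + c * f b := by
  have h : ∀ k : Fin n, (if k = a ∨ k = b then c * f k else 0)
      = (if k = a then c * f a else 0) + (if k = b then c * f b else 0) := by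
    intro k
    by_cases h1 : k = a <;> by_cases h2 : k = b <;> simp_all
  rw [Finset.sum_congr rfl fun k _ => h k, Finset.sum_add_distrib]
  simp

lemma mulF (n : ℕ) (X : Matrix (TautIdx n) (TautIdx n) ℚ) :
    Frow n * X = Matrix.of fun α β =>
      X α β - (match α with
        | Sum.inr (Sum.inr K) =>
            5/14 * (X (Sum.inr (Sum.inl K.1.1)) β + X (Sum.inr (Sum.inl K.1.2)) β)
        | _ => 0) := by
  ext α β
  rw [Matrix.mul_apply, Fintype.sum_sum_type, Fintype.sum_sum_type]
  rcases α with u | k | K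
  · simp [Frow, ite_mul, one_mul, zero_mul]
  · simp [Frow, ite_mul, one_mul, zero_mul]
  · have hK : K.1.1 ≠ K.1.2 := ne_of_lt K.2
    simp only [Frow, Matrix.of_apply, add_mul, ite_mul, one_mul, zero_mul,
      Finset.sum_add_distrib]
    rw [sum_ite_or hK]
    simp [sub_eq_add_neg]
    ring

set_option maxHeartbeats 1000000 in
lemma FME (n : ℕ) : Frow n * (Mhat n * Ecol n) = Tmat n := by
  rw [mulE, mulF]
  ext α β
  rcases α with u | k | K <;> rcases β with v | q | P
  · simp [Mhat, Tmat]
  · simp [Mhat, Tmat]; ring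
  · simp [Mhat, Tmat]; ring
  · simp [Mhat, Tmat]
  · simp only [Mhat, Tmat, Matrix.of_apply]
    split_ifs <;> norm_num
  · obtain ⟨⟨p, q⟩, hpq⟩ := P
    simp only [Mhat, Tmat, Matrix.of_apply]
    split_ifs <;>
      first
        | (exfalso; simp only [Fin.ext_iff, Fin.lt_def, Prod.mk.injEq, not_or,
            Prod.ext_iff, not_and] at *; omega)
        | norm_num
  · obtain ⟨⟨a, b⟩, hab⟩ := K
    simp [Mhat, Tmat]
    ring
  · obtain ⟨⟨a, b⟩, hab⟩ := K
    simp only [Mhat, Tmat, Matrix.of_apply]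
    split_ifs <;>
      first
        | (exfalso; simp only [Fin.ext_iff, Fin.lt_def, Prod.mk.injEq, not_or,
            Prod.ext_iff, not_and] at *; omega)
        | norm_num
  · obtain ⟨⟨a, b⟩, hab⟩ := K
    obtain ⟨⟨p, q⟩, hpq⟩ := P
    simp only [Mhat, Tmat, Matrix.of_apply, Subtype.mk.injEq]
    split_ifs <;>
      first
        | (exfalso; simp only [Fin.ext_iff, Fin.lt_def, Prod.mk.injEq, not_or,
            Prod.ext_iff, not_and] at *; omega)
        | norm_num

/-! ### Counting helpers -/

lemma count_gt (n : ℕ) (m : Fin n) :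
    ∑ b : Fin n, (if m < b then (1:ℚ) else 0) = ((n - 1 - m.val : ℕ) : ℚ) := by
  rw [Finset.sum_boole]
  norm_cast
  rw [show (Finset.univ.filter fun b : Fin n => m < b) = Finset.Ioi m by
    ext b; simp]
  exact Fin.card_Ioi m

lemma count_gt_nat (n : ℕ) (m : Fin n) :
    ∑ b : Fin n, (if m < b then 1 else 0) = n - 1 - m.val := by
  rw [Finset.sum_boole]
  rw [show (Finset.univ.filter fun b : Fin n => m < b) = Finset.Ioi m by
    ext b; simp]
  simp [Fin.card_Ioi m]

lemma sum_pairIdx (n : ℕ) (f : Fin n × Fin n → ℚ) :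
    ∑ P : PairIdx n, f P.1
      = ∑ a : Fin n, ∑ b : Fin n, if a < b then f (a, b) else 0 := by
  rw [← Finset.sum_subtype (Finset.univ.filter fun p : Fin n × Fin n => p.1 < p.2)
      (by simp) f]
  rw [Finset.sum_filter, Fintype.sum_prod_type]

lemma card_pairIdx (n : ℕ) : Fintype.card (PairIdx n) = n * (n - 1) / 2 := by
  classical
  have h1 : Fintype.card (PairIdx n)
      = ∑ P : PairIdx n, (1:ℚ) := by simp
  have h2 : ∑ P : PairIdx n, (1:ℚ)
      = ∑ a : Fin n, ∑ b : Fin n, if a < b then (1:ℚ) else 0 :=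
    sum_pairIdx n (fun _ => 1)
  have h3 : ∑ a : Fin n, ∑ b : Fin n, (if a < b then (1:ℚ) else 0)
      = ∑ a : Fin n, ((n - 1 - a.val : ℕ) : ℚ) := by
    exact Finset.sum_congr rfl fun a _ => count_gt n a
  have h4 : ∑ a : Fin n, ((n - 1 - a.val : ℕ) : ℚ) = ((n * (n-1) / 2 : ℕ) : ℚ) := by
    rw [← Nat.cast_sum]
    norm_cast
    rw [Fin.sum_univ_eq_sum_range (fun i => n - 1 - i)]
    rw [Finset.sum_range_reflect (fun i => i) n, Finset.sum_range_id]
  have := h1.trans (h2.trans (h3.trans h4))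
  exact_mod_cast this

/-! ### Block decompositions via sumAssoc -/

abbrev assocE (n : ℕ) : (Unit ⊕ Fin n) ⊕ PairIdx n ≃ TautIdx n :=
  Equiv.sumAssoc Unit (Fin n) (PairIdx n)

def Amat (n : ℕ) : Matrix (Unit ⊕ Fin n) (Unit ⊕ Fin n) ℚ :=
  Matrix.fromBlocks (Matrix.of fun _ _ => 5*((n:ℚ)+6)) (Matrix.of fun _ _ => 4)
    (Matrix.of fun _ _ => 7) ((28:ℚ) • 1)

def Bmat (n : ℕ) : Matrix (Unit ⊕ Fin n) (PairIdx n) ℚ :=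
  Matrix.of fun r P =>
    match r with
    | Sum.inl _ => -4
    | Sum.inr k => if k = P.1.1 then -4 else 0

def Dmat (n : ℕ) : Matrix (PairIdx n) (PairIdx n) ℚ :=
  Matrix.of fun K P =>
    (if P.1.1 = K.1.1 ∨ P.1.1 = K.1.2 then -(4/7) else 0) +
    (if K.1 = P.1 then -4 else 0)

lemma detE (n : ℕ) : (Ecol n).det = 1 := by
  rw [← Matrix.det_submatrix_equiv_self (assocE n) (Ecol n)]
  have h : (Ecol n).submatrix (assocE n) (assocE n) =
      Matrix.fromBlocks
        (Matrix.fromBlocks 1 (Matrix.of fun _ _ => -1) 0 1)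
        (Matrix.of fun r (P : PairIdx n) =>
          match r with
          | Sum.inl _ => 0
          | Sum.inr (k : Fin n) => if k = P.1.2 then -1 else 0)
        0 1 := by
    ext i j
    rcases i with (u | k) | K <;> rcases j with (v | q) | P <;>
      simp [Ecol, Matrix.one_apply, Subtype.ext_iff]
  rw [h, Matrix.det_fromBlocks_zero₂₁, Matrix.det_fromBlocks_zero₂₁]
  simp

lemma detF (n : ℕ) : (Frow n).det = 1 := by
  rw [← Matrix.det_submatrix_equiv_self (assocE n) (Frow n)]
  have h : (Frow n).submatrix (assocE n) (assocE n) =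
      Matrix.fromBlocks 1
        0
        (Matrix.of fun (K : PairIdx n) r =>
          match r with
          | Sum.inl _ => 0
          | Sum.inr (k : Fin n) => if k = K.1.1 ∨ k = K.1.2 then -(5/14) else 0)
        1 := by
    ext i j
    rcases i with (u | k) | K <;> rcases j with (v | q) | P <;>
      simp [Frow, Matrix.one_apply, Subtype.ext_iff]
  rw [h, Matrix.det_fromBlocks_zero₁₂]
  simp

lemma detT_split (n : ℕ) : (Tmat n).det = (Amat n).det * (Dmat n).det := by
  rw [← Matrix.det_submatrix_equiv_self (assocE n) (Tmat n)]
  have h : (Tmat n).submatrix (assocE n) (assocE n) =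
      Matrix.fromBlocks (Amat n) (Bmat n) 0 (Dmat n) := by
    ext i j
    rcases i with (u | k) | K <;> rcases j with (v | q) | P <;>
      simp [Tmat, Amat, Bmat, Dmat, Matrix.one_apply]
  rw [h, Matrix.det_fromBlocks_zero₂₁]

lemma detA (n : ℕ) : (Amat n).det = 28^n * (4*(n:ℚ)+30) := by
  letI : Invertible ((28:ℚ) • (1 : Matrix (Fin n) (Fin n) ℚ)) :=
    ⟨(28:ℚ)⁻¹ • 1,
      by rw [Matrix.smul_mul, Matrix.mul_smul, smul_smul, Matrix.one_mul]; norm_num,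
      by rw [Matrix.smul_mul, Matrix.mul_smul, smul_smul, Matrix.one_mul]; norm_num⟩
  rw [Amat, Matrix.det_fromBlocks₂₂]
  have h1 : ((28:ℚ) • (1 : Matrix (Fin n) (Fin n) ℚ)).det = 28^n := by
    rw [Matrix.det_smul, Matrix.det_one, Fintype.card_fin, mul_one]
  have h2 : ⅟((28:ℚ) • (1 : Matrix (Fin n) (Fin n) ℚ)) = (28:ℚ)⁻¹ • 1 := rfl
  rw [h1, h2, Matrix.det_unique]
  simp [Matrix.mul_apply, Matrix.one_apply, Finset.mul_sum, mul_ite]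
  ring

/-! ### The pair block -/

def Qmat (n : ℕ) : Matrix (PairIdx n) (PairIdx n) ℚ :=
  Matrix.of fun K P =>
    (if P.1.1 = K.1.1 ∨ P.1.1 = K.1.2 then 1 else 0) +
    (if K.1 = P.1 then 7 else 0)

def Umat (n : ℕ) : Matrix (PairIdx n) (Fin n) ℚ :=
  Matrix.of fun K m => if m = K.1.1 ∨ m = K.1.2 then 1 else 0

def Vmat (n : ℕ) : Matrix (Fin n) (PairIdx n) ℚ :=
  Matrix.of fun m P => if m = P.1.1 then 1 else 0

def Wmat (n : ℕ) : Matrix (Fin n) (Fin n) ℚ :=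
  Matrix.of fun m m' =>
    if m = m' then ((n + 6 - m.val : ℕ) : ℚ) else if m < m' then 1 else 0

lemma D_eq_smul_Q (n : ℕ) : Dmat n = (-(4:ℚ)/7) • Qmat n := by
  ext K P
  simp only [Dmat, Qmat, Matrix.smul_apply, Matrix.of_apply, smul_eq_mul, mul_add, mul_ite,
    mul_one, mul_zero]
  split_ifs <;> norm_num

lemma Q_eq (n : ℕ) : Qmat n = (7:ℚ) • 1 + Umat n * Vmat n := by
  ext K P
  have h : (Umat n * Vmat n) K P
      = if P.1.1 = K.1.1 ∨ P.1.1 = K.1.2 then 1 else 0 := by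
    rw [Matrix.mul_apply]
    rw [Finset.sum_eq_single P.1.1]
    · simp [Umat, Vmat]
    · intro b _ hb
      simp [Vmat, hb]
    · simp
  simp only [Qmat, Matrix.add_apply, Matrix.smul_apply, Matrix.one_apply, Matrix.of_apply, h,
    smul_eq_mul, mul_ite, mul_one, mul_zero]
  have : (K = P) ↔ (K.1 = P.1) := Subtype.ext_iff
  rw [add_comm]
  congr 1
  simp [this]

lemma VU_eq (n : ℕ) : (7:ℚ) • 1 + Vmat n * Umat n = Wmat n := by
  ext m m'
  have h : (Vmat n * Umat n) m m'
      = ∑ a : Fin n, ∑ b : Fin n, if a < b then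
          (if m = a then (1:ℚ) else 0) * (if m' = a ∨ m' = b then 1 else 0) else 0 := by
    rw [Matrix.mul_apply]
    exact sum_pairIdx n fun p =>
      (if m = p.1 then (1:ℚ) else 0) * (if m' = p.1 ∨ m' = p.2 then 1 else 0)
  rw [Matrix.add_apply, h]
  have h2 : ∀ a : Fin n, (∑ b : Fin n, if a < b then
        (if m = a then (1:ℚ) else 0) * (if m' = a ∨ m' = b then 1 else 0) else 0)
      = if a = m then (∑ b : Fin n, if m < b then
          (if m' = m ∨ m' = b then (1:ℚ) else 0) else 0) else 0 := by
    intro a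
    by_cases ha : a = m
    · subst ha; simp
    · have hma : m ≠ a := fun h => ha h.symm
      simp [hma, ha]
  rw [Finset.sum_congr rfl fun a _ => h2 a, Finset.sum_ite_eq' Finset.univ m]
  simp only [Finset.mem_univ, if_true]
  by_cases hmm : m' = m
  · subst hmm
    have : (∑ b : Fin n, if m' < b then (if m' = m' ∨ m' = b then (1:ℚ) else 0) else 0)
        = ∑ b : Fin n, if m' < b then (1:ℚ) else 0 := by
      apply Finset.sum_congr rfl; intro b _; simp
    rw [this, count_gt]
    simp only [Wmat, Matrix.smul_apply, Matrix.one_apply, Matrix.of_apply, if_pos rfl,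
      smul_eq_mul, mul_one]
    have hv : m'.val < n := m'.isLt
    have : (n + 6 - m'.val : ℕ) = 7 + (n - 1 - m'.val) := by omega
    rw [this]
    push_cast [Nat.cast_add]
    ring
  · have : (∑ b : Fin n, if m < b then (if m' = m ∨ m' = b then (1:ℚ) else 0) else 0)
        = ∑ b : Fin n, if b = m' then (if m < b then (1:ℚ) else 0) else 0 := by
      apply Finset.sum_congr rfl; intro b _
      by_cases hb : b = m'
      · subst hb; simp [hmm]
      · have hmb : m' ≠ b := fun h => hb h.symm
        simp [hb, hmm, hmb]
    rw [this, Finset.sum_ite_eq' Finset.univ m']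
    simp only [Finset.mem_univ, if_true]
    simp only [Wmat, Matrix.smul_apply, Matrix.one_apply, Matrix.of_apply, smul_eq_mul]
    rw [if_neg (Ne.symm hmm), if_neg (Ne.symm hmm)]
    ring

lemma detW (n : ℕ) : (Wmat n).det = ∏ m : Fin n, ((n + 6 - m.val : ℕ) : ℚ) := by
  rw [Matrix.det_of_upperTriangular]
  · exact Finset.prod_congr rfl fun m _ => by simp [Wmat]
  · intro i j hji
    have h1 : i ≠ j := (ne_of_lt hji).symm
    have h2 : ¬ i < j := not_lt.2 hji.le
    simp [Wmat, h1, h2]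

lemma fact_prod : ∀ n : ℕ, (∏ m : Fin n, (n + 6 - m.val)) * 720 = Nat.factorial (n + 6)
  | 0 => by decide
  | (k+1) => by
    rw [Fin.prod_univ_succ]
    have h : ∀ m : Fin k, (k + 1 + 6 - (m.succ).val) = k + 6 - m.val := by
      intro m; simp only [Fin.val_succ]; omega
    rw [Finset.prod_congr rfl fun m _ => h m]
    have := fact_prod k
    have h2 : k + 1 + 6 - (0 : Fin (k+1)).val = k + 7 := by simp
    rw [h2, mul_assoc, this]
    simp [Nat.factorial_succ]

lemma prodW (n : ℕ) : ∏ m : Fin n, ((n + 6 - m.val : ℕ) : ℚ)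
    = (Nat.factorial (n + 6) : ℚ) / 720 := by
  have h := fact_prod n
  have h2 : (((∏ m : Fin n, (n + 6 - m.val)) * 720 : ℕ) : ℚ)
      = ((Nat.factorial (n + 6) : ℕ) : ℚ) := Nat.cast_inj.mpr h
  rw [Nat.cast_mul, Nat.cast_prod] at h2
  rw [eq_div_iff (by norm_num)]
  simpa using h2

lemma detQ (n : ℕ) : (Qmat n).det
    = 7^(Fintype.card (PairIdx n)) * ((7:ℚ)⁻¹)^n * (Wmat n).det := by
  have h1 : Qmat n = (7:ℚ) • (1 + ((7:ℚ)⁻¹ • Umat n) * Vmat n) := by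
    rw [Q_eq, smul_add, Matrix.smul_mul, smul_smul]
    norm_num
  have h2 : (1 : Matrix (Fin n) (Fin n) ℚ) + Vmat n * ((7:ℚ)⁻¹ • Umat n)
      = (7:ℚ)⁻¹ • Wmat n := by
    rw [Matrix.mul_smul, ← VU_eq, smul_add, smul_smul]
    norm_num
  rw [h1, Matrix.det_smul, Matrix.det_one_add_mul_comm, h2, Matrix.det_smul,
    Fintype.card_fin]
  ring

lemma detD (n : ℕ) : (Dmat n).det
    = (-(4:ℚ)/7)^(Fintype.card (PairIdx n)) * (Qmat n).det := by
  rw [D_eq_smul_Q, Matrix.det_smul]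

lemma detM (n : ℕ) : (Mhat n).det = (Tmat n).det := by
  have h := congrArg Matrix.det (FME n)
  rwa [Matrix.det_mul, Matrix.det_mul, detF, detE, one_mul, mul_one] at h

lemma scalar_id (n c : ℕ) (X : ℚ) :
    (28:ℚ)^n * (4*(n:ℚ)+30) * ((-(4:ℚ)/7)^c * ((7:ℚ)^c * ((7:ℚ)⁻¹)^n * X))
      = (-1)^c * 2^(2*c+2*n+1) * (2*(n:ℚ)+15) * X := by
  have h1 : (-(4:ℚ)/7)^c * (7:ℚ)^c = (-1:ℚ)^c * (2:ℚ)^(2*c) := by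
    rw [← mul_pow, show (-(4:ℚ)/7) * 7 = (-1) * 2^2 by norm_num, mul_pow, ← pow_mul]
  have h2 : (28:ℚ)^n * ((7:ℚ)⁻¹)^n = (2:ℚ)^(2*n) := by
    rw [← mul_pow, show (28:ℚ) * 7⁻¹ = 2^2 by norm_num, ← pow_mul]
  calc (28:ℚ)^n * (4*(n:ℚ)+30) * ((-(4:ℚ)/7)^c * ((7:ℚ)^c * ((7:ℚ)⁻¹)^n * X))
      = ((28:ℚ)^n * ((7:ℚ)⁻¹)^n) * ((-(4:ℚ)/7)^c * (7:ℚ)^c) * (4*(n:ℚ)+30) * X := by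
        ring
    _ = (2:ℚ)^(2*n) * ((-1:ℚ)^c * (2:ℚ)^(2*c)) * (4*(n:ℚ)+30) * X := by rw [h1, h2]
    _ = (-1)^c * 2^(2*c+2*n+1) * (2*(n:ℚ)+15) * X := by
        rw [pow_succ, pow_add]; ring

lemma detM_final (n : ℕ) : (Mhat n).det
    = (-1) ^ (n * (n - 1) / 2) * 2 ^ (n ^ 2 + n + 1) * (2 * (n : ℚ) + 15)
        * ((Nat.factorial (n + 6) : ℚ) / 720) := by
  have h2c : 2 * (n * (n-1) / 2) = n * (n-1) :=
    Nat.two_mul_div_two_of_even (Nat.even_mul_pred_self n)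
  have hnn : n * (n-1) + 2*n = n^2 + n := by
    cases n with
    | zero => rfl
    | succ k => simp [Nat.succ_sub_one]; ring
  have hexp : 2 * (n * (n-1) / 2) + 2*n + 1 = n^2 + n + 1 := by
    rw [h2c, hnn]
  rw [detM, detT_split, detA, detD, detQ, detW, prodW, card_pairIdx, scalar_id, hexp]

theorem stmt12' (n : ℕ) :
    (Mhat n).det
      = (-1) ^ (n * (n - 1) / 2) * 2 ^ (n ^ 2 + n + 1) * (2 * (n : ℚ) + 15)
          * ((Nat.factorial (n + 6) : ℚ) / (Nat.factorial 6 : ℚ)) ∧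
    IsUnit (Mhat n) ∧ (Mhat n).rank = n * (n + 1) / 2 + 1 := by
  have h720 : ((Nat.factorial 6 : ℕ) : ℚ) = 720 := by norm_num [Nat.factorial]
  have hdet : (Mhat n).det
      = (-1) ^ (n * (n - 1) / 2) * 2 ^ (n ^ 2 + n + 1) * (2 * (n : ℚ) + 15)
          * ((Nat.factorial (n + 6) : ℚ) / (Nat.factorial 6 : ℚ)) := by
    rw [detM_final, h720]
  have hne : (Mhat n).det ≠ 0 := by
    rw [hdet]
    apply mul_ne_zero
    apply mul_ne_zero
    apply mul_ne_zero
    · exact pow_ne_zero _ (by norm_num)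
    · exact pow_ne_zero _ (by norm_num)
    · positivity
    · exact div_ne_zero (Nat.cast_ne_zero.mpr (Nat.factorial_ne_zero _))
        (Nat.cast_ne_zero.mpr (Nat.factorial_ne_zero _))
  have hu : IsUnit (Mhat n) :=
    (Matrix.isUnit_iff_isUnit_det _).mpr (isUnit_iff_ne_zero.mpr hne)
  refine ⟨hdet, hu, ?_⟩
  rw [Matrix.rank_of_isUnit _ hu]
  have hcard : Fintype.card (TautIdx n) = 1 + (n + n * (n-1) / 2) := by
    simp [card_pairIdx]
  rw [hcard]
  have h2c : 2 * (n * (n-1) / 2) = n * (n-1) :=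
    Nat.two_mul_div_two_of_even (Nat.even_mul_pred_self n)
  have h2d : 2 * (n * (n+1) / 2) = n * (n+1) :=
    Nat.two_mul_div_two_of_even (Nat.even_mul_succ_self n)
  have hnn : n * (n-1) + 2*n = n * (n+1) := by
    cases n with
    | zero => rfl
    | succ k => simp [Nat.succ_sub_one]; ring
  obtain ⟨a, ha⟩ : ∃ a, n * (n-1) = a := ⟨_, rfl⟩
  obtain ⟨b, hb⟩ : ∃ b, n * (n+1) = b := ⟨_, rfl⟩
  rw [ha] at h2c hnn ⊢
  rw [hb] at h2d hnn
  omega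

end Stmt12Aux

/-- det M̂ = (-1)^{n(n-1)/2} · 2^{n²+n+1} · (2n+15) · (n+6)!/6!; in particular
M̂ is invertible and has full rank n(n+1)/2 + 1. -/
theorem stmt12 (n : ℕ) (hn : 1 ≤ n) :
    (Mhat n).det
      = (-1) ^ (n * (n - 1) / 2) * 2 ^ (n ^ 2 + n + 1) * (2 * (n : ℚ) + 15)
          * ((Nat.factorial (n + 6) : ℚ) / (Nat.factorial 6 : ℚ)) ∧
    IsUnit (Mhat n) ∧ (Mhat n).rank = n * (n + 1) / 2 + 1 := by
  exact Stmt12Aux.stmt12' n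
end

section
/- Every coordinate of the vector M̂·u_i at an index other than i, i+1, {k,i}, {k,i+1} (k < i), {i,l}, {i+1,l} (l > i+1) vanishes; specifically (M̂·u_i)_∅ = 0, (M̂·u_i)_k = 0 for k ∉ {i,i+1}, (M̂·u_i)_i = 28, (M̂·u_i)_{i+1} = -28, (M̂·u_i)_{{k,i}} = 10 and (M̂·u_i)_{{k,i+1}} = -10 for k < i, (M̂·u_i)_{{i,l}} = 10 and (M̂·u_i)_{{i+1,l}} = -10 for l > i+1, and (M̂·u_i)_{{i,i+1}} = 0. -/
open Matrix

/-- The coordinates of M̂·u_i (with j = i+1):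
(M̂u)_∅ = 0; (M̂u)_k = 0 for k ∉ {i,i+1}; (M̂u)_i = 28; (M̂u)_{i+1} = -28;
(M̂u)_{{k,i}} = 10 and (M̂u)_{{k,i+1}} = -10 for k < i;
(M̂u)_{{i,l}} = 10 and (M̂u)_{{i+1,l}} = -10 for l > i+1;
(M̂u)_{{i,i+1}} = 0; and every pair coordinate not involving i or i+1 vanishes. -/
theorem stmt13 (n : ℕ) (hn : 2 ≤ n) (i j : Fin n) (hij : (j : ℕ) = (i : ℕ) + 1)
    (hlt : i < j) :
    let Mu := Mhat n *ᵥ uvec n i j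
    Mu (Sum.inl ()) = 0 ∧
    (∀ k : Fin n, k ≠ i → k ≠ j → Mu (Sum.inr (Sum.inl k)) = 0) ∧
    Mu (Sum.inr (Sum.inl i)) = 28 ∧
    Mu (Sum.inr (Sum.inl j)) = -28 ∧
    (∀ k : Fin n, ∀ h : k < i,
      Mu (Sum.inr (Sum.inr ⟨(k, i), h⟩)) = 10) ∧
    (∀ k : Fin n, ∀ h : k < j, k < i →
      Mu (Sum.inr (Sum.inr ⟨(k, j), h⟩)) = -10) ∧
    (∀ l : Fin n, ∀ h : i < l, j < l →
      Mu (Sum.inr (Sum.inr ⟨(i, l), h⟩)) = 10) ∧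
    (∀ l : Fin n, ∀ h : j < l,
      Mu (Sum.inr (Sum.inr ⟨(j, l), h⟩)) = -10) ∧
    Mu (Sum.inr (Sum.inr ⟨(i, j), hlt⟩)) = 0 ∧
    (∀ P : PairIdx n, P.1.1 ≠ i → P.1.1 ≠ j → P.1.2 ≠ i → P.1.2 ≠ j →
      Mu (Sum.inr (Sum.inr P)) = 0) := by
  intro Mu
  have hne : i ≠ j := ne_of_lt hlt
  have hu : uvec n i j = fun β =>
      (if β = Sum.inr (Sum.inl i) then (1:ℚ) else 0) -
      (if β = Sum.inr (Sum.inl j) then (1:ℚ) else 0) := by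
    funext β
    rcases β with _ | k | P
    · simp [uvec]
    · simp only [uvec, Sum.inr.injEq, Sum.inl.injEq]
      split_ifs with h1 h2 <;> simp_all
    · simp [uvec]
  have key : ∀ α, Mu α =
      Mhat n α (Sum.inr (Sum.inl i)) - Mhat n α (Sum.inr (Sum.inl j)) := by
    intro α
    show (Mhat n *ᵥ uvec n i j) α = _
    simp [Matrix.mulVec, dotProduct, hu, mul_sub, Finset.sum_sub_distrib,
      mul_ite, Finset.sum_ite_eq']
  refine ⟨?_, ?_, ?_, ?_, ?_, ?_, ?_, ?_, ?_, ?_⟩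
  · rw [key]; simp [Mhat]
  · intro k hki hkj; rw [key]; simp [Mhat, hki, hkj]
  · rw [key]; simp [Mhat, hne]; norm_num
  · rw [key]; simp [Mhat, hne.symm]; norm_num
  · intro k h; rw [key]
    have h1 : i ≠ k := (ne_of_lt h).symm
    have h2 : j ≠ k := fun e => absurd (e ▸ (h.trans hlt)) (lt_irrefl _)
    simp [Mhat, h1, h2, hne.symm]; norm_num
  · intro k h hki; rw [key]
    have h1 : i ≠ k := (ne_of_lt hki).symm
    simp [Mhat, h1, hne]; norm_num
  · intro l h hjl; rw [key]
    have h1 : j ≠ l := ne_of_lt hjl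
    simp [Mhat, h1, hne, hne.symm]; norm_num
  · intro l h; rw [key]
    have h1 : i ≠ l := ne_of_lt (hlt.trans h)
    have h2 : j ≠ l := ne_of_lt h
    simp [Mhat, h1, h2, hne]; norm_num
  · rw [key]; simp [Mhat, hne, hne.symm]
  · intro P h1 h2 h3 h4; rw [key]
    simp [Mhat, Ne.symm h1, Ne.symm h2, Ne.symm h3, Ne.symm h4, h1.symm, h2.symm, h3.symm, h4.symm]
end

section
/- In the polynomial ring ℚ[ψ_1,...,ψ_n, κ_1, κ_2, κ_{1,1}], with P₁, P₂(k), P₃, P₅(k,l) the Pixton relation polynomials for genus 3 defined in the context, the identity (7/4)·P₁ - (3/16)·P₃ + (3/16)·Σ_{i=1}^n P₂(i) = c·(κ_2 - Σ_{i=1}^n ψ_i²) holds for some nonzero rational constant c. -/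
open MvPolynomial Finset

/-- Variables of ℚ[ψ_1,…,ψ_n, κ_1, κ_2, κ_{1,1}]. -/
abbrev GVar (n : ℕ) := Fin n ⊕ Fin 3

noncomputable def ps (n : ℕ) (i : Fin n) : MvPolynomial (GVar n) ℚ := X (Sum.inl i)
noncomputable def kap1 (n : ℕ) : MvPolynomial (GVar n) ℚ := X (Sum.inr 0)
noncomputable def kap2 (n : ℕ) : MvPolynomial (GVar n) ℚ := X (Sum.inr 1)
noncomputable def kap11 (n : ℕ) : MvPolynomial (GVar n) ℚ := X (Sum.inr 2)

/-- Pixton relation (1):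
35Σψ_i² + 6Σ_{i<j}ψ_iψ_j - 6Σκ_1ψ_i - 35κ_2 + 3κ_{1,1}. -/
noncomputable def Pix1 (n : ℕ) : MvPolynomial (GVar n) ℚ :=
  35 * ∑ i, ps n i ^ 2
  + 6 * ∑ i, ∑ j ∈ univ.filter (i < ·), ps n i * ps n j
  - 6 * ∑ i, kap1 n * ps n i - 35 * kap2 n + 3 * kap11 n

/-- Pixton relation (2)_k. -/
noncomputable def Pix2 (n : ℕ) (k : Fin n) : MvPolynomial (GVar n) ℚ :=
  35 * ∑ i ∈ univ.filter (· ≠ k), ps n i ^ 2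
  - 45 * ps n k ^ 2
  - 10 * ∑ i ∈ univ.filter (· ≠ k), ps n k * ps n i
  + 6 * ∑ i ∈ univ.filter (· ≠ k),
      ∑ j ∈ univ.filter (fun j => i < j ∧ j ≠ k), ps n i * ps n j
  + 10 * kap1 n * ps n k
  - 6 * ∑ i ∈ univ.filter (· ≠ k), kap1 n * ps n i
  - 35 * kap2 n + 3 * kap11 n

/-- Pixton relation (3):
35(n+4)Σψ_i² + 6(n+4)Σ_{i<j}ψ_iψ_j - (6n+40)Σκ_1ψ_i - (35n+220)κ_2 + (3n+28)κ_{1,1}. -/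
noncomputable def Pix3 (n : ℕ) : MvPolynomial (GVar n) ℚ :=
  C (35 * ((n : ℚ) + 4)) * ∑ i, ps n i ^ 2
  + C (6 * ((n : ℚ) + 4)) * ∑ i, ∑ j ∈ univ.filter (i < ·), ps n i * ps n j
  - C (6 * (n : ℚ) + 40) * ∑ i, kap1 n * ps n i
  - C (35 * (n : ℚ) + 220) * kap2 n + C (3 * (n : ℚ) + 28) * kap11 n

/-- Pixton relation (5)_{k,l}. -/
noncomputable def Pix5 (n : ℕ) (k l : Fin n) : MvPolynomial (GVar n) ℚ :=
  35 * ∑ i ∈ univ.filter (fun i => i ≠ k ∧ i ≠ l), ps n i ^ 2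
  + 6 * ∑ i ∈ univ.filter (fun i => i ≠ k ∧ i ≠ l),
      ∑ j ∈ univ.filter (fun j => i < j ∧ j ≠ k ∧ j ≠ l), ps n i * ps n j
  - 6 * ∑ i ∈ univ.filter (fun i => i ≠ k ∧ i ≠ l), kap1 n * ps n i
  - 35 * kap2 n + 3 * kap11 n

section Aux
variable {R : Type*} [CommRing R] {n : ℕ}

lemma aux_sum_filter_ne (k : Fin n) (g : Fin n → R) :
    ∑ i ∈ univ.filter (· ≠ k), g i = ∑ i, g i - g k := by
  rw [Finset.filter_ne', Finset.sum_erase_eq_sub (mem_univ k)]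

lemma aux_inner (i k : Fin n) (h : Fin n → R) :
    ∑ j ∈ univ.filter (fun j => i < j ∧ j ≠ k), h j
      = ∑ j ∈ univ.filter (i < ·), h j - if i < k then h k else 0 := by
  have he : univ.filter (fun j => i < j ∧ j ≠ k) = (univ.filter (i < ·)).erase k := by
    ext j; simp [Finset.mem_erase, and_comm]
  rw [he]
  by_cases hk : i < k
  · rw [Finset.sum_erase_eq_sub (by simp [hk]), if_pos hk]
  · rw [Finset.erase_eq_of_notMem (by simp [hk]), if_neg hk, sub_zero]

lemma aux_swap (g : Fin n → Fin n → R) :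
    ∑ k, ∑ i, (if i < k then g i k else 0) = ∑ i, ∑ j ∈ univ.filter (i < ·), g i j := by
  rw [Finset.sum_comm]
  simp [Finset.sum_filter]

lemma aux_sq (g : Fin n → R) :
    (∑ i, g i) * (∑ i, g i)
      = ∑ i, g i ^ 2 + 2 * ∑ i, ∑ j ∈ univ.filter (i < ·), g i * g j := by
  rw [Finset.sum_mul_sum]
  have key : ∀ i : Fin n, ∑ j, g i * g j
      = g i ^ 2 + (∑ j ∈ univ.filter (i < ·), g i * g j)
        + ∑ j, (if j < i then g j * g i else 0) := by
    intro i
    rw [Finset.sum_filter]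
    have h1 : ∀ j : Fin n, g i * g j
        = (if i = j then g i ^ 2 else 0) + ((if i < j then g i * g j else 0)
          + (if j < i then g j * g i else 0)) := by
      intro j
      rcases lt_trichotomy i j with h | h | h
      · simp [h, h.ne, asymm h, mul_comm]
      · simp [h, lt_irrefl, sq]
      · simp [h, h.ne', asymm h, mul_comm]
    rw [Finset.sum_congr rfl fun j _ => h1 j, Finset.sum_add_distrib,
      Finset.sum_add_distrib, Finset.sum_ite_eq]
    simp [add_assoc]
  rw [Finset.sum_congr rfl fun i _ => key i]
  rw [Finset.sum_add_distrib, Finset.sum_add_distrib, aux_swap]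
  ring

lemma aux_split (c0 K A' : R) (g1 g2 g4 g5 : Fin n → R) :
    ∑ k, (c0 + 16*(K*g1 k) - 70*g2 k - 10*(g1 k * A') - 6*g4 k - 6*g5 k)
      = n • c0 + 16*(K*∑ k, g1 k) - 70*∑ k, g2 k - 10*((∑ k, g1 k)*A')
        - 6*∑ k, g4 k - 6*∑ k, g5 k := by
  simp [Finset.sum_sub_distrib, Finset.sum_add_distrib, Finset.mul_sum,
    Finset.sum_mul, Finset.sum_const, Finset.card_univ]

end Aux

/-- (7/4)P₁ - (3/16)P₃ + (3/16)Σᵢ P₂(i) = c·(κ_2 - Σψ_i²) for some c ≠ 0. -/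
theorem stmt15 (n : ℕ) :
    ∃ c : ℚ, c ≠ 0 ∧
      C (7 / 4 : ℚ) * Pix1 n - C (3 / 16 : ℚ) * Pix3 n
          + C (3 / 16 : ℚ) * ∑ i, Pix2 n i
        = C c * (kap2 n - ∑ i, ps n i ^ 2) := by
  classical
  refine ⟨-20, by norm_num, ?_⟩
  have hA : (∑ i, ps n i) * (∑ i, ps n i)
      = ∑ i, ps n i ^ 2 + 2 * ∑ i, ∑ j ∈ univ.filter (i < ·), ps n i * ps n j :=
    aux_sq _
  have hK : ∑ i, kap1 n * ps n i = kap1 n * ∑ i, ps n i := (Finset.mul_sum _ _ _).symm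
  have hP2 : ∀ k : Fin n, Pix2 n k =
      (35*(∑ i, ps n i ^ 2) + 6*(∑ i, ∑ j ∈ univ.filter (i < ·), ps n i * ps n j)
        - 35*kap2 n + 3*kap11 n - 6*(kap1 n * ∑ i, ps n i))
      + 16*(kap1 n * ps n k) - 70 * (ps n k ^ 2)
      - 10 * (ps n k * ∑ i, ps n i)
      - 6 * (∑ i, if i < k then ps n i * ps n k else 0)
      - 6 * (∑ j ∈ univ.filter (k < ·), ps n k * ps n j) := by
    intro k
    simp only [Pix2]
    rw [aux_sum_filter_ne k (fun i => ps n i ^ 2),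
        aux_sum_filter_ne k (fun i => ps n k * ps n i),
        aux_sum_filter_ne k (fun i => kap1 n * ps n i)]
    rw [Finset.sum_congr rfl (fun i _ => aux_inner i k (fun j => ps n i * ps n j))]
    rw [aux_sum_filter_ne k
      (fun i => (∑ j ∈ univ.filter (i < ·), ps n i * ps n j)
        - if i < k then ps n i * ps n k else 0)]
    rw [Finset.sum_sub_distrib, if_neg (lt_irrefl k), hK,
      ← Finset.mul_sum univ (ps n) (ps n k)]
    ring
  have h2 : ∑ k, Pix2 n k =
      n • (35*(∑ i, ps n i ^ 2) + 6*(∑ i, ∑ j ∈ univ.filter (i < ·), ps n i * ps n j)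
        - 35*kap2 n + 3*kap11 n - 6*(kap1 n * ∑ i, ps n i))
      + 16*(kap1 n * ∑ i, ps n i) - 70 * ∑ i, ps n i ^ 2
      - 10 * ((∑ i, ps n i) * ∑ i, ps n i)
      - 6 * (∑ i, ∑ j ∈ univ.filter (i < ·), ps n i * ps n j)
      - 6 * (∑ i, ∑ j ∈ univ.filter (i < ·), ps n i * ps n j) := by
    rw [Finset.sum_congr rfl (fun k _ => hP2 k), aux_split]
    rw [aux_swap (fun i k => ps n i * ps n k)]
  have e1 : (C (7/4 : ℚ) : MvPolynomial (GVar n) ℚ) = C (1/16 : ℚ) * 28 := by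
    rw [show (28 : MvPolynomial (GVar n) ℚ) = C (28 : ℚ) from (map_ofNat _ _).symm,
      ← map_mul]
    norm_num
  have e2 : (C (3/16 : ℚ) : MvPolynomial (GVar n) ℚ) = C (1/16 : ℚ) * 3 := by
    rw [show (3 : MvPolynomial (GVar n) ℚ) = C (3 : ℚ) from (map_ofNat _ _).symm,
      ← map_mul]
    norm_num
  have e3 : (C (-20 : ℚ) : MvPolynomial (GVar n) ℚ) = C (1/16 : ℚ) * (-320) := by
    rw [show (-320 : MvPolynomial (GVar n) ℚ) = C (-320 : ℚ) by
      rw [map_neg]; norm_num [map_ofNat], ← map_mul]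
    norm_num
  rw [h2, e1, e2, e3]
  simp only [Pix1, Pix3, hK, map_mul, map_add, map_ofNat, map_natCast, nsmul_eq_mul]
  linear_combination (C (1/16 : ℚ) * (-30) : MvPolynomial (GVar n) ℚ) * hA
end

section
/- In the polynomial ring ℚ[ψ_1,...,ψ_n, κ_1, κ_2, κ_{1,1}], with P₁, P₂(k), P₅(k,l) the genus-3 Pixton relation polynomials, the identity -((2n+1)/3)·P₁ - (n-2)·P₂(l) - Σ_{i≠l} P₂(i) + (8/3)·Σ_{i≠l} P₅(l,i) = c·(κ_1ψ_l - (5/6)(n+5)ψ_l² - (5/6)Σ_{i≠l}ψ_i²) holds for some nonzero rational constant c. -/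
open MvPolynomial Finset

section AuxStmt17

variable {n : ℕ} {M : Type*} [CommRing M]

lemma sum_filter_ne' (k : Fin n) (g : Fin n → M) :
    ∑ i ∈ univ.filter (· ≠ k), g i = (∑ i, g i) - g k := by
  rw [filter_ne', Finset.sum_erase_eq_sub (mem_univ k)]

lemma sum_filter_ne2' (k l : Fin n) (h : k ≠ l) (g : Fin n → M) :
    ∑ i ∈ univ.filter (fun i => i ≠ k ∧ i ≠ l), g i = (∑ i, g i) - g k - g l := by
  have he : univ.filter (fun i : Fin n => i ≠ k ∧ i ≠ l) = (univ.erase k).erase l := by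
    ext x; simp [and_comm]
  rw [he, Finset.sum_erase_eq_sub (by simp [h.symm] : l ∈ univ.erase k),
    Finset.sum_erase_eq_sub (mem_univ k)]

lemma inner_split (k i : Fin n) (g : Fin n → M) :
    ∑ j ∈ univ.filter (fun j => i < j ∧ j ≠ k), g j
      = (∑ j ∈ univ.filter (i < ·), g j) - (if i < k then g k else 0) := by
  have h := Finset.sum_filter_add_sum_filter_not (univ.filter (i < ·)) (· ≠ k) g
  rw [filter_filter, filter_filter] at h
  have h2 : univ.filter (fun j : Fin n => i < j ∧ ¬j ≠ k) = if i < k then {k} else ∅ := by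
    split_ifs with hik
    · ext x
      simp only [mem_filter, mem_univ, true_and, not_not, mem_singleton]
      constructor
      · rintro ⟨_, rfl⟩; rfl
      · rintro rfl; exact ⟨hik, rfl⟩
    · ext x
      simp only [mem_filter, mem_univ, true_and, not_not, notMem_empty, iff_false, not_and]
      rintro h1 rfl; exact hik h1
  rw [h2] at h
  split_ifs at h ⊢ with hik
  · rw [sum_singleton] at h; exact eq_sub_of_add_eq h
  · rw [sum_empty, add_zero] at h; rw [h, sub_zero]

lemma split_ne (i : Fin n) (g : Fin n → M) :
    ∑ j ∈ univ.filter (· ≠ i), g j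
      = ∑ j ∈ univ.filter (· < i), g j + ∑ j ∈ univ.filter (i < ·), g j := by
  have h := Finset.sum_filter_add_sum_filter_not (univ.filter (· ≠ i)) (· < i) g
  rw [filter_filter, filter_filter] at h
  have h1 : univ.filter (fun j : Fin n => j ≠ i ∧ j < i) = univ.filter (· < i) := by
    ext x
    simp only [mem_filter, mem_univ, true_and, and_iff_right_iff_imp]
    exact fun h => ne_of_lt h
  have h2 : univ.filter (fun j : Fin n => j ≠ i ∧ ¬j < i) = univ.filter (i < ·) := by
    ext x
    simp only [mem_filter, mem_univ, true_and]
    constructor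
    · rintro ⟨hne, hnlt⟩; exact lt_of_le_of_ne (not_lt.mp hnlt) (Ne.symm hne)
    · intro h; exact ⟨ne_of_gt h, not_lt.mpr (le_of_lt h)⟩
  rw [h1, h2] at h
  exact h.symm

lemma pair_split (k : Fin n) (f : Fin n → M) :
    ∑ i ∈ univ.filter (· ≠ k), ∑ j ∈ univ.filter (fun j => i < j ∧ j ≠ k), f i * f j
      = (∑ i, ∑ j ∈ univ.filter (i < ·), f i * f j) - f k * ((∑ i, f i) - f k) := by
  rw [sum_filter_ne' k (fun i => ∑ j ∈ univ.filter (fun j => i < j ∧ j ≠ k), f i * f j)]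
  have e1 : ∀ i : Fin n, ∑ j ∈ univ.filter (fun j => i < j ∧ j ≠ k), f i * f j
      = (∑ j ∈ univ.filter (i < ·), f i * f j) - (if i < k then f i * f k else 0) :=
    fun i => inner_split k i (fun j => f i * f j)
  simp only [e1]
  rw [Finset.sum_sub_distrib, ← Finset.sum_filter]
  rw [if_neg (lt_irrefl k), sub_zero]
  have e2 : f k * ((∑ i, f i) - f k)
      = (∑ i ∈ univ.filter (· < k), f i * f k) + ∑ j ∈ univ.filter (k < ·), f k * f j := by
    rw [← sum_filter_ne' k f, ← Finset.mul_sum, split_ne k f, mul_add, Finset.mul_sum,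
      Finset.mul_sum]
    congr 1
    exact Finset.sum_congr rfl fun i _ => mul_comm _ _
  rw [e2]; ring

lemma sum_lt_comm (f : Fin n → M) :
    ∑ i, ∑ j ∈ univ.filter (· < i), f i * f j
      = ∑ i, ∑ j ∈ univ.filter (i < ·), f i * f j := by
  simp only [Finset.sum_filter]
  rw [Finset.sum_comm]
  refine Finset.sum_congr rfl fun i _ => Finset.sum_congr rfl fun j _ => ?_
  by_cases h : i < j <;> simp [h, mul_comm]

lemma sq_sum (f : Fin n → M) :
    (∑ i, f i) ^ 2 = (∑ i, f i ^ 2) + 2 * ∑ i, ∑ j ∈ univ.filter (i < ·), f i * f j := by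
  have expand : (∑ i, f i) ^ 2 = ∑ i, ∑ j, f i * f j := by
    rw [sq, Finset.sum_mul_sum]
  have e : ∀ i : Fin n, ∑ j, f i * f j
      = f i ^ 2 + ((∑ j ∈ univ.filter (· < i), f i * f j)
        + ∑ j ∈ univ.filter (i < ·), f i * f j) := by
    intro i
    have h1 := sum_filter_ne' i (fun j => f i * f j)
    have h2 := split_ne i (fun j => f i * f j)
    rw [h1] at h2
    linear_combination h2
  rw [expand]
  simp only [e]
  rw [Finset.sum_add_distrib, Finset.sum_add_distrib, sum_lt_comm]
  ring

lemma absorb (p : Fin n → Prop) [DecidablePred p] (k : Fin n) (F : Fin n → M)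
    (h : F k = 0) :
    ∑ x ∈ univ.filter p, F x = ∑ x ∈ univ.filter (fun x => p x ∧ x ≠ k), F x := by
  rw [Finset.sum_filter, Finset.sum_filter]
  refine Finset.sum_congr rfl fun x _ => ?_
  by_cases hx : x = k
  · subst hx; simp [h]
  · simp [hx]

lemma pair_split2 (k l : Fin n) (hkl : k ≠ l) (f : Fin n → M) :
    ∑ i ∈ univ.filter (fun i => i ≠ k ∧ i ≠ l),
        ∑ j ∈ univ.filter (fun j => i < j ∧ j ≠ k ∧ j ≠ l), f i * f j
      = (∑ i, ∑ j ∈ univ.filter (i < ·), f i * f j) - f k * ((∑ i, f i) - f k)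
        - f l * ((∑ i, f i) - f k - f l) := by
  classical
  set g : Fin n → M := fun j => if j = k then 0 else f j with hg
  have hgk : g k = 0 := by simp [hg]
  have hgl : g l = f l := by simp [hg, hkl.symm]
  have hgeq : ∀ j : Fin n, j ≠ k → g j = f j := fun j hj => by simp [hg, hj]
  have hS : (∑ i, g i) = (∑ i, f i) - f k := by
    have hp : ∀ i : Fin n, g i = f i - (if i = k then f i else 0) := by
      intro i; by_cases h : i = k <;> simp [hg, h]
    simp only [hp]
    rw [Finset.sum_sub_distrib, Finset.sum_ite_eq' univ k f, if_pos (mem_univ k)]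
  have hBg : (∑ i, ∑ j ∈ univ.filter (i < ·), g i * g j)
      = (∑ i, ∑ j ∈ univ.filter (i < ·), f i * f j) - f k * ((∑ i, f i) - f k) := by
    rw [← pair_split k f]
    have habs : (∑ i, ∑ j ∈ univ.filter (i < ·), g i * g j)
        = ∑ i ∈ univ.filter (· ≠ k), ∑ j ∈ univ.filter (i < ·), g i * g j := by
      rw [filter_ne']
      exact (Finset.sum_erase _ (by simp [hgk])).symm
    rw [habs]
    refine Finset.sum_congr rfl fun i hi => ?_
    have hik : i ≠ k := by simpa using (mem_filter.mp hi).2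
    have hinner := absorb (fun j => i < j) k (fun j => g i * g j) (by simp [hgk])
    rw [hinner]
    refine Finset.sum_congr rfl fun j hj => ?_
    have hjk : j ≠ k := (mem_filter.mp hj).2.2
    show g i * g j = f i * f j
    rw [hgeq i hik, hgeq j hjk]
  have main := pair_split l g
  have hL : (∑ i ∈ univ.filter (· ≠ l), ∑ j ∈ univ.filter (fun j => i < j ∧ j ≠ l), g i * g j)
      = ∑ i ∈ univ.filter (fun i => i ≠ k ∧ i ≠ l),
          ∑ j ∈ univ.filter (fun j => i < j ∧ j ≠ k ∧ j ≠ l), f i * f j := by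
    rw [absorb (· ≠ l) k
      (fun i => ∑ j ∈ univ.filter (fun j => i < j ∧ j ≠ l), g i * g j) (by simp [hgk])]
    rw [show univ.filter (fun i : Fin n => i ≠ l ∧ i ≠ k)
        = univ.filter (fun i : Fin n => i ≠ k ∧ i ≠ l) by
      ext x; simp [and_comm]]
    refine Finset.sum_congr rfl fun i hi => ?_
    have hik : i ≠ k := by simpa using (mem_filter.mp hi).2.1
    rw [absorb (fun j => i < j ∧ j ≠ l) k (fun j => g i * g j) (by simp [hgk])]
    rw [show univ.filter (fun j : Fin n => (i < j ∧ j ≠ l) ∧ j ≠ k)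
        = univ.filter (fun j : Fin n => i < j ∧ j ≠ k ∧ j ≠ l) by
      ext x; simp only [mem_filter, mem_univ, true_and]; tauto]
    refine Finset.sum_congr rfl fun j hj => ?_
    have hjk : j ≠ k := (mem_filter.mp hj).2.2.1
    show g i * g j = f i * f j
    rw [hgeq i hik, hgeq j hjk]
  rw [← hL, main, hBg, hS, hgl]

end AuxStmt17

lemma Pix1_eq (n : ℕ) :
    Pix1 n
      = 35 * (∑ i, ps n i ^ 2) + 6 * (∑ i, ∑ j ∈ univ.filter (i < ·), ps n i * ps n j)
        - 6 * (kap1 n * ∑ i, ps n i) - 35 * kap2 n + 3 * kap11 n := by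
  unfold Pix1
  rw [← Finset.mul_sum]

lemma Pix2_eq (n : ℕ) (k : Fin n) :
    Pix2 n k
      = (35 * (∑ i, ps n i ^ 2) + 6 * (∑ i, ∑ j ∈ univ.filter (i < ·), ps n i * ps n j)
          - 6 * (kap1 n * ∑ i, ps n i) - 35 * kap2 n + 3 * kap11 n)
        + (16 * kap1 n - 16 * ∑ i, ps n i) * ps n k - 64 * ps n k ^ 2 := by
  unfold Pix2
  rw [sum_filter_ne' k (fun i => ps n i ^ 2), sum_filter_ne' k (fun i => ps n k * ps n i),
    sum_filter_ne' k (fun i => kap1 n * ps n i), pair_split k (ps n), ← Finset.mul_sum,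
    ← Finset.mul_sum]
  ring

lemma Pix5_eq (n : ℕ) (k m : Fin n) (h : k ≠ m) :
    Pix5 n k m
      = (35 * (∑ i, ps n i ^ 2) - 35 * ps n k ^ 2
          + 6 * (∑ i, ∑ j ∈ univ.filter (i < ·), ps n i * ps n j)
          - 6 * (ps n k * ((∑ i, ps n i) - ps n k))
          - 6 * (kap1 n * ((∑ i, ps n i) - ps n k)) - 35 * kap2 n + 3 * kap11 n)
        + (6 * kap1 n + 6 * ps n k - 6 * ∑ i, ps n i) * ps n m - 29 * ps n m ^ 2 := by
  unfold Pix5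
  rw [sum_filter_ne2' k m h (fun i => ps n i ^ 2),
    sum_filter_ne2' k m h (fun i => kap1 n * ps n i), pair_split2 k m h (ps n),
    ← Finset.mul_sum]
  ring

/-- -((2n+1)/3)P₁ - (n-2)P₂(l) - Σ_{i≠l} P₂(i) + (8/3)Σ_{i≠l} P₅(l,i)
= c·(κ_1ψ_l - (5/6)(n+5)ψ_l² - (5/6)Σ_{i≠l}ψ_i²) for some c ≠ 0. -/

theorem stmt17 (n : ℕ) (l : Fin n) :
    ∃ c : ℚ, c ≠ 0 ∧
      C (-(2 * (n : ℚ) + 1) / 3) * Pix1 n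
          + C (-((n : ℚ) - 2)) * Pix2 n l
          - ∑ i ∈ Finset.univ.filter (· ≠ l), Pix2 n i
          + C (8 / 3 : ℚ) * ∑ i ∈ Finset.univ.filter (· ≠ l), Pix5 n l i
        = C c * (kap1 n * ps n l - C (5 / 6 * ((n : ℚ) + 5)) * ps n l ^ 2
            - C (5 / 6 : ℚ) * ∑ i ∈ Finset.univ.filter (· ≠ l), ps n i ^ 2) := by
  classical
  have hn : 1 ≤ n := Nat.one_le_iff_ne_zero.mpr (by rintro rfl; exact l.elim0)
  refine ⟨16, by norm_num, ?_⟩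
  -- abbreviations
  have hcast : ((n - 1 : ℕ) : ℚ) = (n : ℚ) - 1 := by
    rw [Nat.cast_sub hn, Nat.cast_one]
  have hs2 : ∑ i ∈ Finset.univ.filter (· ≠ l), Pix2 n i
      = (C ((n : ℚ)) - 1) * (35 * (∑ i, ps n i ^ 2)
          + 6 * (∑ i, ∑ j ∈ univ.filter (i < ·), ps n i * ps n j)
          - 6 * (kap1 n * ∑ i, ps n i) - 35 * kap2 n + 3 * kap11 n)
        + (16 * kap1 n - 16 * ∑ i, ps n i) * ((∑ i, ps n i) - ps n l)
        - 64 * ((∑ i, ps n i ^ 2) - ps n l ^ 2) := by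
    simp only [Pix2_eq]
    rw [Finset.sum_sub_distrib, Finset.sum_add_distrib, Finset.sum_const,
      ← Finset.mul_sum, ← Finset.mul_sum, sum_filter_ne' l (ps n),
      sum_filter_ne' l (fun i => ps n i ^ 2), filter_ne',
      card_erase_of_mem (mem_univ l), card_univ, Fintype.card_fin,
      ← Nat.cast_smul_eq_nsmul ℚ, hcast, smul_eq_C_mul, map_sub, map_one]
  have hs5 : ∑ i ∈ Finset.univ.filter (· ≠ l), Pix5 n l i
      = (C ((n : ℚ)) - 1) * (35 * (∑ i, ps n i ^ 2) - 35 * ps n l ^ 2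
          + 6 * (∑ i, ∑ j ∈ univ.filter (i < ·), ps n i * ps n j)
          - 6 * (ps n l * ((∑ i, ps n i) - ps n l))
          - 6 * (kap1 n * ((∑ i, ps n i) - ps n l)) - 35 * kap2 n + 3 * kap11 n)
        + (6 * kap1 n + 6 * ps n l - 6 * ∑ i, ps n i) * ((∑ i, ps n i) - ps n l)
        - 29 * ((∑ i, ps n i ^ 2) - ps n l ^ 2) := by
    have e : ∀ i ∈ Finset.univ.filter (· ≠ l), Pix5 n l i
        = (35 * (∑ i, ps n i ^ 2) - 35 * ps n l ^ 2
            + 6 * (∑ i, ∑ j ∈ univ.filter (i < ·), ps n i * ps n j)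
            - 6 * (ps n l * ((∑ i, ps n i) - ps n l))
            - 6 * (kap1 n * ((∑ i, ps n i) - ps n l)) - 35 * kap2 n + 3 * kap11 n)
          + (6 * kap1 n + 6 * ps n l - 6 * ∑ i, ps n i) * ps n i - 29 * ps n i ^ 2 := by
      intro i hi
      exact Pix5_eq n l i (Ne.symm (by simpa using (mem_filter.mp hi).2))
    rw [Finset.sum_congr rfl e]
    rw [Finset.sum_sub_distrib, Finset.sum_add_distrib, Finset.sum_const,
      ← Finset.mul_sum, ← Finset.mul_sum, sum_filter_ne' l (ps n),
      sum_filter_ne' l (fun i => ps n i ^ 2), filter_ne',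
      card_erase_of_mem (mem_univ l), card_univ, Fintype.card_fin,
      ← Nat.cast_smul_eq_nsmul ℚ, hcast, smul_eq_C_mul, map_sub, map_one]
  rw [Pix1_eq, Pix2_eq n l, hs2, hs5, sum_filter_ne' l (fun i => ps n i ^ 2)]
  -- normalize the C coefficients
  have hC1 : (C (-(2 * (n : ℚ) + 1) / 3) : MvPolynomial (GVar n) ℚ)
      = (-4 * C ((n : ℚ)) - 2) * C ((6 : ℚ)⁻¹) := by
    rw [show (-(2 * (n : ℚ) + 1) / 3) = (-4 * (n : ℚ) - 2) * (6 : ℚ)⁻¹ by ring, C_mul]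
    simp only [map_sub, map_mul, map_neg, map_ofNat]
  have hC2 : (C (-((n : ℚ) - 2)) : MvPolynomial (GVar n) ℚ) = -(C ((n : ℚ)) - 2) := by
    simp only [map_neg, map_sub, map_ofNat]
  have hC3 : (C ((8 : ℚ) / 3) : MvPolynomial (GVar n) ℚ) = 16 * C ((6 : ℚ)⁻¹) := by
    rw [show (8 : ℚ) / 3 = 16 * (6 : ℚ)⁻¹ by norm_num, C_mul, map_ofNat]
  have hC5 : (C (5 / 6 * ((n : ℚ) + 5)) : MvPolynomial (GVar n) ℚ)
      = (5 * C ((n : ℚ)) + 25) * C ((6 : ℚ)⁻¹) := by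
    rw [show (5 / 6 * ((n : ℚ) + 5)) = (5 * (n : ℚ) + 25) * (6 : ℚ)⁻¹ by ring, C_mul]
    simp only [map_add, map_mul, map_ofNat]
  have hC6 : (C ((5 : ℚ) / 6) : MvPolynomial (GVar n) ℚ) = 5 * C ((6 : ℚ)⁻¹) := by
    rw [show (5 : ℚ) / 6 = 5 * (6 : ℚ)⁻¹ by norm_num, C_mul, map_ofNat]
  have hC7 : (C (16 : ℚ) : MvPolynomial (GVar n) ℚ) = 16 := map_ofNat _ _
  have hu : (6 : MvPolynomial (GVar n) ℚ) * C ((6 : ℚ)⁻¹) = 1 := by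
    rw [← map_ofNat (C : ℚ →+* MvPolynomial (GVar n) ℚ) 6, ← C_mul]
    norm_num
  rw [hC1, hC2, hC3, hC5, hC6, hC7]
  linear_combination
    (-9 * kap11 n + 105 * kap2 n - 32 * (ps n l * kap1 n) + 192 * ps n l ^ 2
      - 18 * (∑ i, ∑ j ∈ univ.filter (i < ·), ps n i * ps n j)
      - 169 * (∑ i, ps n i ^ 2)
      + 34 * ((∑ i, ps n i) * kap1 n) + 48 * ((∑ i, ps n i) * ps n l)
      - 16 * (∑ i, ps n i) ^ 2
      + 6 * (C ((n : ℚ)) * kap11 n) - 70 * (C ((n : ℚ)) * kap2 n)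
      + 16 * (C ((n : ℚ)) * ps n l * kap1 n) - 64 * (C ((n : ℚ)) * ps n l ^ 2)
      + 12 * (C ((n : ℚ)) * (∑ i, ∑ j ∈ univ.filter (i < ·), ps n i * ps n j))
      + 70 * (C ((n : ℚ)) * (∑ i, ps n i ^ 2))
      - 12 * (C ((n : ℚ)) * (∑ i, ps n i) * kap1 n)
      - 16 * (C ((n : ℚ)) * (∑ i, ps n i) * ps n l)) * hu
end
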